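/- arXiv:2206.09098 — 4 statements merged into one kernel-verified Lean document; each statement's English description precedes it below -/
import Mathlib

section
/- Let φ : ℝ̄ → [0,∞] be non-increasing, non-negative, lower semi-continuous with φ(α) → 0 as α → ∞. For η ∈ [0,1] define C_φ(η,α) = η φ(α) + (1−η) φ(−α) and α_φ(η) = inf{α : α minimizes C_φ(η,·)}. Then α_φ(η) is itself a minimizer of C_φ(η,·) (i.e., it is the smallest minimizer), and α_φ is non-decreasing in η. -/
open scoped ENNReal

/-- The conditional risk `C_φ(η, α) = η φ(α) + (1−η) φ(−α)`. -/
noncomputable def Cphi (φ : EReal → ℝ≥0∞) (η : ℝ) (α : EReal) : ℝ≥0∞ :=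
  ENNReal.ofReal η * φ α + ENNReal.ofReal (1 - η) * φ (-α)

/-- `α_φ(η)`: the infimum of the set of minimizers of `C_φ(η, ·)`. -/
noncomputable def alphaPhi (φ : EReal → ℝ≥0∞) (η : ℝ) : EReal :=
  sInf {α : EReal | Cphi φ η α = ⨅ β : EReal, Cphi φ η β}

open Filter Set

/-- A lower semicontinuous `ℝ≥0∞`-valued function on `EReal` attains its infimum. -/
private lemma exists_min {f : EReal → ℝ≥0∞} (hf : LowerSemicontinuous f) :
    ∃ x, f x = ⨅ y, f y := by
  rcases eq_or_ne (⨅ y, f y) ⊤ with h | h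
  · exact ⟨⊥, le_antisymm (le_top.trans_eq h.symm) (iInf_le _ _)⟩
  · have htc : ∀ n : ℕ, IsClosed (f ⁻¹' Iic ((⨅ y, f y) + (↑(n + 1) : ℝ≥0∞)⁻¹)) := fun n =>
      lowerSemicontinuous_iff_isClosed_preimage.1 hf _
    have htn : ∀ n : ℕ, (f ⁻¹' Iic ((⨅ y, f y) + (↑(n + 1) : ℝ≥0∞)⁻¹)).Nonempty := by
      intro n
      have hlt : (⨅ y, f y) < (⨅ y, f y) + (↑(n + 1) : ℝ≥0∞)⁻¹ :=
        ENNReal.lt_add_right h (by simp)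
      obtain ⟨x, hx⟩ := iInf_lt_iff.1 hlt
      exact ⟨x, by simpa using hx.le⟩
    have hsub : ∀ n : ℕ, (f ⁻¹' Iic ((⨅ y, f y) + (↑(n + 1 + 1) : ℝ≥0∞)⁻¹))
        ⊆ f ⁻¹' Iic ((⨅ y, f y) + (↑(n + 1) : ℝ≥0∞)⁻¹) := by
      intro n x hx
      simp only [mem_preimage, mem_Iic] at hx ⊢
      refine le_trans hx ?_
      gcongr
      exact_mod_cast Nat.le_succ n
    obtain ⟨x, hx⟩ := IsCompact.nonempty_iInter_of_sequence_nonempty_isCompact_isClosed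
      (fun n : ℕ => f ⁻¹' Iic ((⨅ y, f y) + (↑(n + 1) : ℝ≥0∞)⁻¹))
      hsub htn ((htc 0).isCompact) htc
    refine ⟨x, le_antisymm ?_ (iInf_le _ _)⟩
    have hxn : ∀ n : ℕ, f x ≤ (⨅ y, f y) + (↑(n + 1) : ℝ≥0∞)⁻¹ := by
      intro n
      have := Set.mem_iInter.1 hx n
      simpa using this
    refine ENNReal.le_of_forall_pos_le_add fun ε hε _ => ?_
    obtain ⟨n, hn⟩ := ENNReal.exists_inv_nat_lt (a := (ε : ℝ≥0∞))
      (by exact_mod_cast hε.ne')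
    have h1 : (↑(n + 1) : ℝ≥0∞)⁻¹ ≤ (n : ℝ≥0∞)⁻¹ := by
      gcongr
      exact_mod_cast Nat.le_succ n
    calc f x ≤ (⨅ y, f y) + (↑(n + 1) : ℝ≥0∞)⁻¹ := hxn n
      _ ≤ (⨅ y, f y) + (n : ℝ≥0∞)⁻¹ := add_le_add_right h1 _
      _ ≤ (⨅ y, f y) + ε := add_le_add_right hn.le _

/-- For a non-increasing, non-negative, lower semi-continuous loss `φ` with
`φ(α) → 0` as `α → ∞`, `α_φ(η)` is itself a minimizer of `C_φ(η, ·)` (hence the smallest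
minimizer), and `α_φ` is non-decreasing on `[0,1]`. -/
theorem stmt_7 (φ : EReal → ℝ≥0∞) (hmono : Antitone φ) (hlsc : LowerSemicontinuous φ)
    (hlim : Filter.Tendsto φ Filter.atTop (nhds 0)) :
    (∀ η ∈ Set.Icc (0 : ℝ) 1, Cphi φ η (alphaPhi φ η) = ⨅ β : EReal, Cphi φ η β) ∧
    (∀ η₁ ∈ Set.Icc (0 : ℝ) 1, ∀ η₂ ∈ Set.Icc (0 : ℝ) 1,
      η₁ ≤ η₂ → alphaPhi φ η₁ ≤ alphaPhi φ η₂) := by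
  have hlscneg : LowerSemicontinuous fun α : EReal => φ (-α) := fun x y hy =>
    (continuous_neg.continuousAt (x := x)).eventually (hlsc (-x) y hy)
  have hlscC : ∀ η : ℝ, LowerSemicontinuous (Cphi φ η) := by
    intro η
    have h1 : LowerSemicontinuous fun α : EReal => ENNReal.ofReal η * φ α :=
      Continuous.comp_lowerSemicontinuous (ENNReal.continuous_const_mul (by simp)) hlsc
        (fun a b h => mul_le_mul_right h _)
    have h2 : LowerSemicontinuous fun α : EReal => ENNReal.ofReal (1 - η) * φ (-α) :=
      Continuous.comp_lowerSemicontinuous (ENNReal.continuous_const_mul (by simp)) hlscneg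
        (fun a b h => mul_le_mul_right h _)
    exact h1.add h2
  have part1 : ∀ η : ℝ, Cphi φ η (alphaPhi φ η) = ⨅ β : EReal, Cphi φ η β := by
    intro η
    obtain ⟨x, hx⟩ := exists_min (hlscC η)
    have hMeq : {α : EReal | Cphi φ η α = ⨅ β : EReal, Cphi φ η β}
        = Cphi φ η ⁻¹' Iic (⨅ β : EReal, Cphi φ η β) := by
      ext α
      exact ⟨fun h => h.le, fun h => le_antisymm h (iInf_le _ _)⟩
    have hMc : IsClosed {α : EReal | Cphi φ η α = ⨅ β : EReal, Cphi φ η β} := by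
      rw [hMeq]; exact lowerSemicontinuous_iff_isClosed_preimage.1 (hlscC η) _
    exact hMc.csInf_mem ⟨x, hx⟩ (OrderBot.bddBelow _)
  refine ⟨fun η _ => part1 η, ?_⟩
  have htop : φ ⊤ = 0 := by
    by_contra h0
    obtain ⟨x, hx⟩ := (hlim.eventually_lt_const (pos_iff_ne_zero.2 h0)).exists
    exact absurd (hmono (le_top : x ≤ ⊤)) hx.not_ge
  intro η₁ hη₁ η₂ hη₂ h12
  rcases eq_or_lt_of_le hη₁.1 with h0 | h0
  · -- η₁ = 0 : `alphaPhi φ 0 = ⊥`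
    have hCbot : Cphi φ 0 ⊥ = 0 := by simp [Cphi, htop]
    have hmem : (⊥ : EReal) ∈ {α : EReal | Cphi φ 0 α = ⨅ β : EReal, Cphi φ 0 β} := by
      have h' : (⨅ β : EReal, Cphi φ 0 β) = 0 :=
        le_antisymm ((iInf_le _ ⊥).trans hCbot.le) (zero_le)
      simpa [h'] using hCbot
    have hbot : alphaPhi φ 0 ≤ ⊥ := sInf_le hmem
    rw [← h0]
    exact hbot.trans bot_le
  rcases eq_or_lt_of_le h12 with rfl | h12'
  · exact le_rfl
  have h1 := part1 η₁
  have h2 := part1 η₂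
  set α₁ := alphaPhi φ η₁ with hα₁
  set α₂ := alphaPhi φ η₂ with hα₂
  by_contra hcon
  push_neg at hcon
  have hlt : α₂ < α₁ := hcon
  have hab : φ α₁ ≤ φ α₂ := hmono hlt.le
  have hdc : φ (-α₂) ≤ φ (-α₁) := hmono (EReal.neg_le_neg_iff.2 hlt.le)
  set D := ENNReal.ofReal (η₂ - η₁) with hD
  have e1 : ENNReal.ofReal η₂ = ENNReal.ofReal η₁ + D := by
    rw [hD, ← ENNReal.ofReal_add hη₁.1 (sub_nonneg.2 h12)]
    congr 1; ring
  have e2 : ENNReal.ofReal (1 - η₁) = ENNReal.ofReal (1 - η₂) + D := by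
    rw [hD, ← ENNReal.ofReal_add (by linarith [hη₂.2]) (sub_nonneg.2 h12)]
    congr 1; ring
  have star : ∀ α : EReal,
      Cphi φ η₂ α + D * φ (-α) = Cphi φ η₁ α + D * φ α := by
    intro α
    simp only [Cphi, e1, e2]
    ring
  have hmin2 : Cphi φ η₂ α₂ ≤ Cphi φ η₂ α₁ := h2.le.trans (iInf_le _ α₁)
  have key : Cphi φ η₁ α₂ ≤ Cphi φ η₁ α₁ := by
    by_cases hb : φ α₂ = ⊤
    · have hoη₂ : ENNReal.ofReal η₂ ≠ 0 := by
        simp only [ne_eq, ENNReal.ofReal_eq_zero, not_le]; linarith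
      have hC2 : Cphi φ η₂ α₂ = ⊤ := by
        simp [Cphi, hb, ENNReal.mul_top hoη₂]
      have hC2' : Cphi φ η₂ α₁ = ⊤ := top_le_iff.1 (hC2 ▸ hmin2)
      rcases ENNReal.add_eq_top.1 hC2' with h | h
      · have ha : φ α₁ = ⊤ := by
          rcases ENNReal.mul_eq_top.1 h with ⟨_, h'⟩ | ⟨h', _⟩
          · exact h'
          · exact absurd h' ENNReal.ofReal_ne_top
        have hC1 : Cphi φ η₁ α₁ = ⊤ := by
          have hoη₁ : ENNReal.ofReal η₁ ≠ 0 := by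
            simp only [ne_eq, ENNReal.ofReal_eq_zero, not_le]; linarith
          simp [Cphi, ha, ENNReal.mul_top hoη₁]
        exact le_top.trans_eq hC1.symm
      · have hc' : φ (-α₁) = ⊤ ∧ ENNReal.ofReal (1 - η₂) ≠ 0 := by
          rcases ENNReal.mul_eq_top.1 h with ⟨h1', h2'⟩ | ⟨h', _⟩
          · exact ⟨h2', h1'⟩
          · exact absurd h' ENNReal.ofReal_ne_top
        have hη₂1 : η₂ < 1 := by
          have h3 := hc'.2
          simp only [ne_eq, ENNReal.ofReal_eq_zero, not_le] at h3
          linarith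
        have hC1 : Cphi φ η₁ α₁ = ⊤ := by
          have ho : ENNReal.ofReal (1 - η₁) ≠ 0 := by
            simp only [ne_eq, ENNReal.ofReal_eq_zero, not_le]; linarith
          simp [Cphi, hc'.1, ENNReal.mul_top ho]
        exact le_top.trans_eq hC1.symm
    · by_cases hc : φ (-α₁) = ⊤
      · have hC1 : Cphi φ η₁ α₁ = ⊤ := by
          have ho : ENNReal.ofReal (1 - η₁) ≠ 0 := by
            simp only [ne_eq, ENNReal.ofReal_eq_zero, not_le]; linarith [hη₂.2]
          simp [Cphi, hc, ENNReal.mul_top ho]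
        exact le_top.trans_eq hC1.symm
      · have hDt : D ≠ ⊤ := ENNReal.ofReal_ne_top
        have hfin : D * φ α₂ + D * φ (-α₁) ≠ ⊤ :=
          ENNReal.add_ne_top.2 ⟨ENNReal.mul_ne_top hDt hb, ENNReal.mul_ne_top hDt hc⟩
        have chain : Cphi φ η₁ α₂ + (D * φ α₂ + D * φ (-α₁))
            ≤ Cphi φ η₁ α₁ + (D * φ α₂ + D * φ (-α₁)) := by
          calc Cphi φ η₁ α₂ + (D * φ α₂ + D * φ (-α₁))
              = (Cphi φ η₂ α₂ + D * φ (-α₂)) + D * φ (-α₁) := by rw [star α₂]; ring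
            _ ≤ (Cphi φ η₂ α₁ + D * φ (-α₂)) + D * φ (-α₁) := by gcongr
            _ = (Cphi φ η₂ α₁ + D * φ (-α₁)) + D * φ (-α₂) := by ring
            _ = (Cphi φ η₁ α₁ + D * φ α₁) + D * φ (-α₂) := by rw [star α₁]
            _ ≤ (Cphi φ η₁ α₁ + D * φ α₂) + D * φ (-α₁) := by gcongr
            _ = Cphi φ η₁ α₁ + (D * φ α₂ + D * φ (-α₁)) := by ring
        exact (ENNReal.add_le_add_iff_right hfin).1 chain
  have hmem : α₂ ∈ {α : EReal | Cphi φ η₁ α = ⨅ β : EReal, Cphi φ η₁ β} :=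
    le_antisymm (key.trans_eq h1) (iInf_le _ α₂)
  exact absurd (sInf_le hmem : α₁ ≤ α₂) hlt.not_ge
end

section
/- Let ψ(α) = e^{−α}, C_ψ*(η) = 2√(η(1−η)), and α_ψ(η) = (1/2)log(η/(1−η)). Suppose (a_n, b_n) are sequences in [0,∞] with η a_n + (1−η) b_n ≥ C_ψ*(η) for all η ∈ [0,1] and all n, and lim_{n→∞} (η₀ a_n + (1−η₀) b_n) = C_ψ*(η₀) for some η₀ ∈ [0,1]. Then a_n → ψ(α_ψ(η₀)) and b_n → ψ(−α_ψ(η₀)) in the extended reals. -/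
open scoped ENNReal

/-- The exponential loss `ψ(α) = e^{−α}`, extended so that `ψ(−∞) = ∞` and `ψ(∞) = 0`. -/
noncomputable def expLoss (α : EReal) : ℝ≥0∞ :=
  if α = ⊥ then ⊤ else if α = ⊤ then 0 else ENNReal.ofReal (Real.exp (-α.toReal))

/-- `α_ψ(η) = (1/2) log(η/(1−η))`, interpreted as `∓∞` at `η = 0, 1`. -/
noncomputable def alphaPsi (η : ℝ) : EReal :=
  if η = 0 then ⊥ else if η = 1 then ⊤ else ((1 / 2 * Real.log (η / (1 - η)) : ℝ) : EReal)

open Filter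

lemma aux_one_le (A B : ℝ) (hA : 0 ≤ A) (hB : 0 ≤ B)
    (h : ∀ η ∈ Set.Icc (0:ℝ) 1, 2 * Real.sqrt (η * (1-η)) ≤ η * A + (1-η) * B) :
    1 ≤ A * B := by
  have key : ∀ X Y : ℝ, 0 ≤ Y → X = 0 →
      (∀ η ∈ Set.Icc (0:ℝ) 1, 2 * Real.sqrt (η * (1-η)) ≤ η * X + (1-η) * Y) → False := by
    intro X Y hY hX0 hc
    set δ : ℝ := 1/(2+Y^2) with hδ
    have hδpos : 0 < δ := by positivity
    have hδhalf : δ ≤ 1/2 := by rw [hδ]; rw [div_le_div_iff₀ (by positivity) (by norm_num)]; nlinarith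
    have h1 := hc (1-δ) ⟨by linarith, by linarith⟩
    rw [hX0] at h1
    set t := Real.sqrt ((1-δ) * (1-(1-δ))) with ht
    have ht0 : 0 ≤ t := Real.sqrt_nonneg _
    have ht2 : t^2 = (1-δ)*δ := by
      rw [ht, Real.sq_sqrt (by nlinarith)]; ring
    have h2 : 2*t ≤ δ*Y := by linarith [h1]
    have hδY : δ * Y^2 < 1 := by
      rw [hδ]; rw [div_mul_eq_mul_div, div_lt_one (by positivity)]; nlinarith
    nlinarith [sq_nonneg (2*t - δ*Y)]
  have hApos : 0 < A := by
    rcases hA.lt_or_eq with h'|h'; · exact h'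
    exact absurd (key A B hB h'.symm h) (fun x => x)
  have hBpos : 0 < B := by
    rcases hB.lt_or_eq with h'|h'; · exact h'
    refine absurd (key B A hA h'.symm ?_) (fun x => x)
    intro η hη
    have := h (1-η) ⟨by linarith [hη.2], by linarith [hη.1]⟩
    have e : (1-η) * (1 - (1-η)) = η * (1-η) := by ring
    rw [e] at this; linarith
  have hAB : 0 < A + B := by linarith
  have hmem : B/(A+B) ∈ Set.Icc (0:ℝ) 1 := by
    constructor
    · positivity
    · rw [div_le_one hAB]; linarith
  have hc := h _ hmem
  have e1 : B/(A+B) * (1 - B/(A+B)) = (A*B)/(A+B)^2 := by field_simp; ring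
  have e2 : B/(A+B) * A + (1 - B/(A+B)) * B = 2*(A*B)/(A+B) := by field_simp; ring
  rw [e1, e2] at hc
  set t := Real.sqrt (A*B) with ht
  have ht2 : t^2 = A*B := Real.sq_sqrt (by positivity)
  have htpos : 0 < t := Real.sqrt_pos.mpr (by positivity)
  have e3 : Real.sqrt ((A*B)/(A+B)^2) = t/(A+B) := by
    rw [show (A*B)/(A+B)^2 = (t/(A+B))^2 by rw [div_pow, ht2], Real.sqrt_sq (by positivity)]
  rw [e3] at hc
  have hta : t ≤ A * B := by
    have := (div_le_div_iff_of_pos_right hAB).mp (by rw [mul_div_assoc] at hc; linarith [hc] : t / (A+B) ≤ (A*B) / (A+B))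
    exact this
  nlinarith

lemma tendsto_top_aux (a b : ℕ → ℝ≥0∞)
    (hab : ∀ n, ∀ η ∈ Set.Icc (0 : ℝ) 1,
      ENNReal.ofReal (2 * Real.sqrt (η * (1 - η))) ≤
        ENNReal.ofReal η * a n + ENNReal.ofReal (1 - η) * b n)
    (hb : Tendsto b atTop (nhds 0)) :
    Tendsto a atTop (nhds ⊤) := by
  rw [ENNReal.tendsto_nhds_top_iff_nat]
  intro m
  set M : ℝ := m + 1 with hMdef
  have hM : 0 < M := by positivity
  set η : ℝ := 1 / (1 + M^2) with hηdef
  have hη0 : 0 < η := by positivity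
  have hη1 : η < 1 := by
    rw [hηdef, div_lt_one (by positivity)]; nlinarith
  set s : ℝ := M / (1 + M^2) with hsdef
  have hs : 0 < s := by positivity
  have hsqrt : Real.sqrt (η * (1-η)) = s := by
    rw [show η * (1-η) = s^2 by rw [hηdef, hsdef]; field_simp; ring, Real.sqrt_sq hs.le]
  have hev : ∀ᶠ n in atTop, b n < ENNReal.ofReal s :=
    hb.eventually_lt_const (by simp [ENNReal.ofReal_pos, hs])
  filter_upwards [hev] with n hn
  have h1 := hab n η ⟨hη0.le, hη1.le⟩
  rw [hsqrt] at h1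
  have h2 : ENNReal.ofReal (2*s) ≤ ENNReal.ofReal η * a n + ENNReal.ofReal s := by
    refine h1.trans (add_le_add_right ?_ _)
    calc ENNReal.ofReal (1-η) * b n ≤ 1 * b n := by
          gcongr; exact ENNReal.ofReal_le_one.mpr (by linarith)
      _ ≤ ENNReal.ofReal s := by rw [one_mul]; exact hn.le
  rw [show (2:ℝ)*s = s + s by ring, ENNReal.ofReal_add hs.le hs.le,
    ENNReal.add_le_add_iff_right ENNReal.ofReal_ne_top] at h2
  have h3 : ENNReal.ofReal η * ENNReal.ofReal M ≤ ENNReal.ofReal η * a n := by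
    rw [← ENNReal.ofReal_mul hη0.le]
    convert h2 using 2
    rw [hηdef, hsdef]; field_simp
  have h4 : ENNReal.ofReal M ≤ a n :=
    (ENNReal.mul_le_mul_iff_right (ENNReal.ofReal_pos.mpr hη0).ne'
      ENNReal.ofReal_ne_top).mp h3
  calc (m:ℝ≥0∞) = ENNReal.ofReal m := by simp
    _ < ENNReal.ofReal M := by rw [ENNReal.ofReal_lt_ofReal_iff hM]; rw [hMdef]; norm_num
    _ ≤ a n := h4

lemma real_core (p : ℝ) (hp0 : 0 < p) (hp1 : p < 1) (A B : ℕ → ℝ)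
    (hprod : ∀ᶠ n in atTop, 1 ≤ A n * B n)
    (hS : Tendsto (fun n => p * A n + (1-p) * B n) atTop (nhds (2*Real.sqrt (p*(1-p))))) :
    Tendsto A atTop (nhds (Real.sqrt (p*(1-p))/p)) ∧
      Tendsto B atTop (nhds (Real.sqrt (p*(1-p))/(1-p))) := by
  have h1p : 0 < 1 - p := by linarith
  set s : ℝ := 2*Real.sqrt (p*(1-p)) with hsdef
  have hs2 : s^2 = 4*(p*(1-p)) := by
    rw [hsdef, mul_pow, Real.sq_sqrt (by positivity)]; ring
  set S : ℕ → ℝ := fun n => p * A n + (1-p) * B n with hSdef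
  set D : ℕ → ℝ := fun n => p * A n - (1-p) * B n with hDdef
  have hDsq : Tendsto (fun n => D n ^ 2) atTop (nhds 0) := by
    have hupper : ∀ᶠ n in atTop, D n ^ 2 ≤ S n ^ 2 - s ^ 2 := by
      filter_upwards [hprod] with n hn
      have : D n ^2 = S n ^2 - 4*(p*(1-p))*(A n * B n) := by
        simp only [hSdef, hDdef]; ring
      nlinarith [this]
    have hlim0 : Tendsto (fun n => S n ^ 2 - s ^ 2) atTop (nhds 0) := by
      have := (hS.mul hS).sub_const (s*s)
      simp only [sub_self] at this
      convert this using 2 <;> ring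
    exact squeeze_zero' (Eventually.of_forall fun n => sq_nonneg _) hupper hlim0
  have hD : Tendsto D atTop (nhds 0) := by
    have habs : Tendsto (fun n => |D n|) atTop (nhds 0) := by
      have := (Real.continuous_sqrt.tendsto' 0 0 (by simp)).comp hDsq
      convert this using 2 with n
      · exact (Real.sqrt_sq_eq_abs _).symm
    exact (tendsto_zero_iff_abs_tendsto_zero _).mpr habs
  constructor
  · have h := (hS.add hD).div_const (2*p)
    have e : (fun n => (S n + D n)/(2*p)) = A := by
      funext n; simp only [hSdef, hDdef]; field_simp; ring
    rw [e] at h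
    convert h using 1
    rw [add_zero, hsdef, mul_div_mul_left _ _ (two_ne_zero)]
  · have h := (hS.sub hD).div_const (2*(1-p))
    have e : (fun n => (S n - D n)/(2*(1-p))) = B := by
      funext n; simp only [hSdef, hDdef]; field_simp; ring
    rw [e] at h
    convert h using 1
    rw [sub_zero, hsdef, mul_div_mul_left _ _ (two_ne_zero)]

lemma expLoss_val (p : ℝ) (h0 : 0 < p) (h1 : p < 1) :
    expLoss (alphaPsi p) = ENNReal.ofReal (Real.sqrt (p*(1-p)) / p) := by
  have h1p : 0 < 1 - p := by linarith
  have hr : 0 < p / (1-p) := by positivity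
  rw [alphaPsi, if_neg h0.ne', if_neg h1.ne, expLoss, if_neg (EReal.coe_ne_bot _),
    if_neg (EReal.coe_ne_top _), EReal.toReal_coe]
  congr 1
  have e1 : Real.exp (-(1/2 * Real.log (p/(1-p)))) = (p/(1-p)) ^ (-(1/2) : ℝ) := by
    rw [Real.rpow_def_of_pos hr]; ring_nf
  rw [e1, Real.rpow_neg hr.le, ← Real.sqrt_eq_rpow, ← Real.sqrt_inv, inv_div]
  rw [Real.sqrt_div h1p.le p]
  rw [Real.sqrt_mul h0.le]
  have hsp := Real.mul_self_sqrt h0.le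
  rw [div_eq_div_iff (Real.sqrt_pos.mpr h0).ne' h0.ne']
  nlinarith [hsp, Real.sqrt_nonneg (1-p)]

lemma expLoss_neg_val (p : ℝ) (h0 : 0 < p) (h1 : p < 1) :
    expLoss (-(alphaPsi p)) = ENNReal.ofReal (Real.sqrt (p*(1-p)) / (1-p)) := by
  have h1p : 0 < 1 - p := by linarith
  have hr : 0 < p / (1-p) := by positivity
  rw [alphaPsi, if_neg h0.ne', if_neg h1.ne, ← EReal.coe_neg, expLoss,
    if_neg (EReal.coe_ne_bot _), if_neg (EReal.coe_ne_top _), EReal.toReal_coe]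
  congr 1
  have e1 : Real.exp (- -(1/2 * Real.log (p/(1-p)))) = (p/(1-p)) ^ ((1/2) : ℝ) := by
    rw [Real.rpow_def_of_pos hr]; ring_nf
  rw [e1, ← Real.sqrt_eq_rpow]
  rw [Real.sqrt_div h0.le, Real.sqrt_mul h0.le]
  have hsp := Real.mul_self_sqrt h1p.le
  rw [div_eq_div_iff (Real.sqrt_pos.mpr h1p).ne' h1p.ne']
  nlinarith [hsp, Real.sqrt_nonneg p]

/-- If `a_n, b_n ∈ [0,∞]` satisfy `η a_n + (1−η) b_n ≥ C_ψ*(η) = 2√(η(1−η))`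
for all `η ∈ [0,1]` and `η₀ a_n + (1−η₀) b_n → C_ψ*(η₀)` for some `η₀ ∈ [0,1]`, then
`a_n → ψ(α_ψ(η₀))` and `b_n → ψ(−α_ψ(η₀))`. -/
theorem stmt_9 (a b : ℕ → ℝ≥0∞)
    (hab : ∀ n, ∀ η ∈ Set.Icc (0 : ℝ) 1,
      ENNReal.ofReal (2 * Real.sqrt (η * (1 - η))) ≤
        ENNReal.ofReal η * a n + ENNReal.ofReal (1 - η) * b n)
    (η₀ : ℝ) (hη₀ : η₀ ∈ Set.Icc (0 : ℝ) 1)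
    (hlim : Filter.Tendsto (fun n => ENNReal.ofReal η₀ * a n + ENNReal.ofReal (1 - η₀) * b n)
      Filter.atTop (nhds (ENNReal.ofReal (2 * Real.sqrt (η₀ * (1 - η₀)))))) :
    Filter.Tendsto a Filter.atTop (nhds (expLoss (alphaPsi η₀))) ∧
      Filter.Tendsto b Filter.atTop (nhds (expLoss (-(alphaPsi η₀)))) := by
  have hab' : ∀ n, ∀ η ∈ Set.Icc (0 : ℝ) 1,
      ENNReal.ofReal (2 * Real.sqrt (η * (1 - η))) ≤
        ENNReal.ofReal η * b n + ENNReal.ofReal (1 - η) * a n := by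
    intro n η hη
    have := hab n (1-η) ⟨by linarith [hη.2], by linarith [hη.1]⟩
    rw [show (1-η)*(1-(1-η)) = η*(1-η) by ring, show (1:ℝ)-(1-η) = η by ring] at this
    rw [add_comm]
    exact this
  by_cases hp0 : η₀ = 0
  · subst hp0
    simp only [ENNReal.ofReal_zero, zero_mul, zero_add, sub_zero, ENNReal.ofReal_one, one_mul,
      Real.sqrt_zero, mul_zero] at hlim
    have hgoal : expLoss (alphaPsi 0) = ⊤ ∧ expLoss (-(alphaPsi 0)) = 0 := by
      constructor <;> simp [alphaPsi, expLoss]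
    rw [hgoal.1, hgoal.2]
    exact ⟨tendsto_top_aux a b hab hlim, hlim⟩
  by_cases hp1 : η₀ = 1
  · subst hp1
    simp only [sub_self, ENNReal.ofReal_zero, zero_mul, add_zero, ENNReal.ofReal_one, one_mul,
      mul_zero, Real.sqrt_zero] at hlim
    have hgoal : expLoss (alphaPsi 1) = 0 ∧ expLoss (-(alphaPsi 1)) = ⊤ := by
      constructor <;> simp [alphaPsi, expLoss]
    rw [hgoal.1, hgoal.2]
    exact ⟨hlim, tendsto_top_aux b a hab' hlim⟩
  obtain ⟨h0, h1⟩ := hη₀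
  have hp0' : 0 < η₀ := h0.lt_of_ne (Ne.symm hp0)
  have hp1' : η₀ < 1 := h1.lt_of_ne hp1
  have h1p : 0 < 1 - η₀ := by linarith
  -- eventual finiteness
  have hfin : ∀ᶠ n in atTop, a n ≠ ⊤ ∧ b n ≠ ⊤ := by
    have := hlim.eventually_lt_const (show ENNReal.ofReal (2 * Real.sqrt (η₀ * (1 - η₀))) < ⊤
      from ENNReal.ofReal_lt_top)
    filter_upwards [this] with n hn
    constructor
    · intro h; rw [h, ENNReal.mul_top (ENNReal.ofReal_pos.mpr hp0').ne'] at hn; simp at hn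
    · intro h; rw [h, ENNReal.mul_top (ENNReal.ofReal_pos.mpr h1p).ne'] at hn; simp at hn
  set A : ℕ → ℝ := fun n => (a n).toReal with hAdef
  set B : ℕ → ℝ := fun n => (b n).toReal with hBdef
  -- real constraint, eventually
  have hprod : ∀ᶠ n in atTop, 1 ≤ A n * B n := by
    filter_upwards [hfin] with n hn
    refine aux_one_le _ _ ENNReal.toReal_nonneg ENNReal.toReal_nonneg ?_
    intro η hη
    have h := hab n η hη
    have hRfin : ENNReal.ofReal η * a n + ENNReal.ofReal (1 - η) * b n ≠ ⊤ := by
      exact ENNReal.add_ne_top.mpr ⟨ENNReal.mul_ne_top ENNReal.ofReal_ne_top hn.1,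
        ENNReal.mul_ne_top ENNReal.ofReal_ne_top hn.2⟩
    have := ENNReal.toReal_mono hRfin h
    rwa [ENNReal.toReal_ofReal (by positivity), ENNReal.toReal_add
      (ENNReal.mul_ne_top ENNReal.ofReal_ne_top hn.1) (ENNReal.mul_ne_top ENNReal.ofReal_ne_top hn.2),
      ENNReal.toReal_mul, ENNReal.toReal_mul, ENNReal.toReal_ofReal hη.1,
      ENNReal.toReal_ofReal (by linarith [hη.2])] at this
  -- real convergence of the sum
  have hSreal : Tendsto (fun n => η₀ * A n + (1-η₀) * B n) atTop
      (nhds (2*Real.sqrt (η₀*(1-η₀)))) := by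
    have h := (ENNReal.tendsto_toReal (ENNReal.ofReal_ne_top)).comp hlim
    rw [ENNReal.toReal_ofReal (by positivity)] at h
    refine h.congr' ?_
    filter_upwards [hfin] with n hn
    simp only [Function.comp_apply]
    rw [ENNReal.toReal_add (ENNReal.mul_ne_top ENNReal.ofReal_ne_top hn.1)
      (ENNReal.mul_ne_top ENNReal.ofReal_ne_top hn.2), ENNReal.toReal_mul, ENNReal.toReal_mul,
      ENNReal.toReal_ofReal hp0'.le, ENNReal.toReal_ofReal h1p.le]
  obtain ⟨hAt, hBt⟩ := real_core η₀ hp0' hp1' A B hprod hSreal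
  rw [expLoss_val η₀ hp0' hp1', expLoss_neg_val η₀ hp0' hp1']
  constructor
  · refine (ENNReal.tendsto_ofReal hAt).congr' ?_
    filter_upwards [hfin] with n hn
    exact ENNReal.ofReal_toReal hn.1
  · refine (ENNReal.tendsto_ofReal hBt).congr' ?_
    filter_upwards [hfin] with n hn
    exact ENNReal.ofReal_toReal hn.2
end

section
/- Weak duality: Let ℙ₀, ℙ₁ be finite positive Borel measures on ℝ^d and let φ satisfy Assumption. Let S_φ be the set of pairs of Borel functions (h₀, h₁) with h₀, h₁ ≥ 0 and η h₁(x) + (1−η) h₀(x) ≥ C_φ*(η) for all x and all η ∈ [0,1]. Then inf_{(h₀,h₁)∈S_φ} [∫ S_ε(h₁) dℙ₁ + ∫ S_ε(h₀) dℙ₀] ≥ sup over ℙ₀' ∈ B_∞ε(ℙ₀), ℙ₁' ∈ B_∞ε(ℙ₁) of ∫ C_φ*(dℙ₁'/d(ℙ₀'+ℙ₁')) d(ℙ₀'+ℙ₁'). -/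
open MeasureTheory
open scoped ENNReal

/-- The optimal conditional risk `C_φ*(η) = inf_α C_φ(η, α)`. -/
noncomputable def CphiStar (φ : EReal → ℝ≥0∞) (η : ℝ) : ℝ≥0∞ :=
  ⨅ α : EReal, Cphi φ η α

/-- The ε-supremum operation `S_ε(h)(x) = sup_{‖y−x‖ ≤ ε} h(y)`. -/
noncomputable def Seps {E : Type*} [NormedAddCommGroup E] (ε : ℝ) (h : E → ℝ≥0∞) (x : E) :
    ℝ≥0∞ :=
  ⨆ y ∈ Metric.closedBall x ε, h y

/-- The ∞-Wasserstein distance: infimum over couplings of the essential supremum of the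
distance. -/
noncomputable def Winf {E : Type*} [NormedAddCommGroup E] [MeasurableSpace E]
    (P Q : Measure E) : ℝ≥0∞ :=
  ⨅ (γ : Measure (E × E)) (_ : γ.map Prod.fst = P ∧ γ.map Prod.snd = Q),
    essSup (fun p => (‖p.1 - p.2‖₊ : ℝ≥0∞)) γ

section WeakDualityAux

variable {E : Type*} [NormedAddCommGroup E] [MeasurableSpace E] [BorelSpace E]

private lemma winf_lt {P Q : Measure E} {b : ℝ≥0∞} (h : Winf P Q < b) :
    ∃ γ : Measure (E × E), (γ.map Prod.fst = P ∧ γ.map Prod.snd = Q) ∧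
      essSup (fun p => (‖p.1 - p.2‖₊ : ℝ≥0∞)) γ < b := by
  rw [Winf, iInf_lt_iff] at h
  obtain ⟨γ, hγ⟩ := h
  rw [iInf_lt_iff] at hγ
  obtain ⟨hc, hv⟩ := hγ
  exact ⟨γ, hc, hv⟩

private lemma winf_finite {P Q : Measure E} [IsFiniteMeasure P] {c : ℝ≥0∞} (hc : c < ⊤)
    (hW : Winf P Q ≤ c) : IsFiniteMeasure Q := by
  obtain ⟨γ, ⟨h1, h2⟩, -⟩ := winf_lt (lt_of_le_of_lt hW hc)
  constructor
  rw [← h2, Measure.map_apply measurable_snd MeasurableSet.univ, Set.preimage_univ]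
  have h1' : P Set.univ = γ Set.univ := by
    rw [← h1, Measure.map_apply measurable_fst MeasurableSet.univ, Set.preimage_univ]
  rw [← h1']
  exact measure_lt_top P _

private lemma winf_closed_bound {P Q : Measure E} [IsFiniteMeasure P] {ε : ℝ}
    (hW : Winf P Q ≤ ENNReal.ofReal ε) {F : Set E} (hF : IsClosed F) :
    Q F ≤ P {x | EMetric.infEdist x F ≤ ENNReal.ofReal ε} := by
  set T : ℕ → Set E := fun n => {x | EMetric.infEdist x F ≤ ENNReal.ofReal ε + ((n : ℝ≥0∞) + 1)⁻¹}
    with hT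
  have hTcl : ∀ n, IsClosed (T n) := fun n =>
    isClosed_le EMetric.continuous_infEdist continuous_const
  have hmono : ∀ {m n : ℕ}, m ≤ n → T n ⊆ T m := by
    intro m n hmn x hx
    refine le_trans hx (add_le_add_right (ENNReal.inv_le_inv.mpr (by gcongr)) _)
  have key : ∀ n, Q F ≤ P (T n) := by
    intro n
    have hlt : Winf P Q < ENNReal.ofReal ε + ((n : ℝ≥0∞) + 1)⁻¹ :=
      lt_of_le_of_lt hW (ENNReal.lt_add_right ENNReal.ofReal_ne_top (by simp))
    obtain ⟨γ, ⟨hγ1, hγ2⟩, hess⟩ := winf_lt hlt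
    have hae : ∀ᵐ q ∂γ, (‖q.1 - q.2‖₊ : ℝ≥0∞) < ENNReal.ofReal ε + ((n : ℝ≥0∞) + 1)⁻¹ :=
      (ENNReal.ae_le_essSup _).mono fun q hq => lt_of_le_of_lt hq hess
    have hsub : Q F ≤ γ (Prod.fst ⁻¹' T n) := by
      rw [← hγ2, Measure.map_apply measurable_snd hF.measurableSet]
      refine measure_mono_ae ?_
      filter_upwards [hae] with q hq hqF
      simp only [Set.mem_preimage, hT, Set.mem_setOf_eq]
      refine le_trans (EMetric.infEdist_le_edist_of_mem hqF) ?_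
      rw [edist_eq_enorm_sub]
      exact hq.le
    calc Q F ≤ γ (Prod.fst ⁻¹' T n) := hsub
      _ = P (T n) := by rw [← hγ1, Measure.map_apply measurable_fst (hTcl n).measurableSet]
  have hiInter : ⋂ n, T n = {x | EMetric.infEdist x F ≤ ENNReal.ofReal ε} := by
    ext x
    simp only [Set.mem_iInter, hT, Set.mem_setOf_eq]
    constructor
    · intro hx
      refine ENNReal.le_of_forall_pos_le_add fun δ hδ _ => ?_
      obtain ⟨n, hn⟩ := ENNReal.exists_inv_nat_lt (a := (δ : ℝ≥0∞)) (by exact_mod_cast hδ.ne')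
      refine (hx n).trans (add_le_add_right ?_ _)
      exact le_trans (ENNReal.inv_le_inv.mpr le_self_add) hn.le
    · intro hx n
      exact hx.trans le_self_add
  have hdir : Directed (· ⊇ ·) T := fun m n =>
    ⟨max m n, hmono (le_max_left m n), hmono (le_max_right m n)⟩
  calc Q F ≤ ⨅ n, P (T n) := le_iInf key
    _ = P (⋂ n, T n) :=
        (Directed.measure_iInter (fun n => (hTcl n).measurableSet.nullMeasurableSet) hdir
          ⟨0, measure_ne_top P _⟩).symm
    _ = _ := by rw [hiInter]

open scoped Classical in
private lemma ennreal_le_one_add_tsum (a : ℝ≥0∞) :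
    a ≤ 1 + ∑' k : ℕ, (if (k : ℝ≥0∞) + 1 < a then (1 : ℝ≥0∞) else 0) := by
  refine le_of_forall_lt fun c hc => ?_
  have hc' : c ≠ ⊤ := hc.ne_top
  set n := Nat.floor c.toReal with hn
  have h1 : c < (n : ℝ≥0∞) + 1 := by
    have h := Nat.lt_floor_add_one c.toReal
    calc c = ENNReal.ofReal c.toReal := (ENNReal.ofReal_toReal hc').symm
      _ < ENNReal.ofReal ((n : ℝ) + 1) := (ENNReal.ofReal_lt_ofReal_iff (by positivity)).mpr h
      _ ≤ (n : ℝ≥0∞) + 1 := by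
          rw [ENNReal.ofReal_add (by positivity) zero_le_one]
          simp
  have hnc : (n : ℝ≥0∞) ≤ c := by
    have h := Nat.floor_le (ENNReal.toReal_nonneg (a := c))
    calc (n : ℝ≥0∞) = ENNReal.ofReal (n : ℝ) := by simp
      _ ≤ ENNReal.ofReal c.toReal := ENNReal.ofReal_le_ofReal h
      _ = c := ENNReal.ofReal_toReal hc'
  have h2 : (n : ℝ≥0∞) ≤ ∑' k : ℕ, (if (k : ℝ≥0∞) + 1 < a then (1 : ℝ≥0∞) else 0) := by
    have : (n : ℝ≥0∞) = ∑ _k ∈ Finset.range n, (1 : ℝ≥0∞) := by simp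
    rw [this]
    refine le_trans (Finset.sum_le_sum fun k hk => ?_) (ENNReal.sum_le_tsum _)
    rw [if_pos]
    have hk' : (k : ℝ≥0∞) + 1 ≤ (n : ℝ≥0∞) := by
      have hkn := Finset.mem_range.mp hk
      exact_mod_cast Nat.succ_le_of_lt hkn
    exact lt_of_le_of_lt (hk'.trans hnc) hc
  exact lt_of_lt_of_le h1 (by rw [add_comm 1]; exact add_le_add_left h2 1)

private lemma lintegral_le_lintegral_seps {P Q : Measure E} [IsFiniteMeasure P]
    [IsFiniteMeasure Q] [ProperSpace E] {ε : ℝ} (hε : 0 ≤ ε)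
    (hW : Winf P Q ≤ ENNReal.ofReal ε) {h : E → ℝ≥0∞} (hm : Measurable h) :
    ∫⁻ x, h x ∂Q ≤ ∫⁻ x, Seps ε h x ∂P := by
  classical
  have hattain : ∀ {F : Set E}, IsClosed F → ∀ {x : E},
      EMetric.infEdist x F ≤ ENNReal.ofReal ε → ∃ y ∈ F, y ∈ Metric.closedBall x ε := by
    intro F hF x hx
    have hne : F.Nonempty := by
      rcases F.eq_empty_or_nonempty with rfl | hne
      · rw [EMetric.infEdist, Metric.infEDist_empty] at hx
        exact absurd (top_le_iff.mp hx) ENNReal.ofReal_ne_top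
      · exact hne
    obtain ⟨y, hyF, hyd⟩ := hF.exists_infDist_eq_dist hne x
    refine ⟨y, hyF, ?_⟩
    rw [Metric.mem_closedBall, dist_comm, ← hyd]
    have ht := ENNReal.toReal_mono ENNReal.ofReal_ne_top hx
    rw [ENNReal.toReal_ofReal hε] at ht
    simpa only [Metric.infDist, EMetric.infEdist] using ht
  have main : ∀ m : ℕ, ∫⁻ x, h x ∂Q ≤
      ((m : ℝ≥0∞) + 1)⁻¹ * Q Set.univ + ∫⁻ x, Seps ε h x ∂P := by
    intro m
    set m' : ℝ≥0∞ := (m : ℝ≥0∞) + 1 with hm'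
    have hm'0 : m' ≠ 0 := by simp [hm']
    have hm'top : m' ≠ ⊤ := by simp [hm']
    set B : ℕ → Set E := fun k => {x | ((k : ℝ≥0∞) + 1) / m' < h x} with hB
    have hBmeas : ∀ k, MeasurableSet (B k) := fun k => hm measurableSet_Ioi
    have hBanti : ∀ {j k : ℕ}, j ≤ k → B k ⊆ B j := by
      intro j k hjk x hx
      simp only [hB, Set.mem_setOf_eq] at hx ⊢
      refine lt_of_le_of_lt ?_ hx
      gcongr
    have stepA : ∫⁻ x, h x ∂Q ≤ m'⁻¹ * (Q Set.univ + ∑' k, Q (B k)) := by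
      have hpt : ∀ x, h x ≤ m'⁻¹ * (1 + ∑' k : ℕ, (B k).indicator (fun _ => (1 : ℝ≥0∞)) x) := by
        intro x
        have hcount := ennreal_le_one_add_tsum (m' * h x)
        have hrw : ∀ k : ℕ, (if (k : ℝ≥0∞) + 1 < m' * h x then (1 : ℝ≥0∞) else 0)
            = (B k).indicator (fun _ => (1 : ℝ≥0∞)) x := by
          intro k
          rw [Set.indicator_apply]
          refine if_congr ?_ rfl rfl
          rw [mul_comm]
          simp only [hB, Set.mem_setOf_eq]
          exact (ENNReal.div_lt_iff (Or.inl hm'0) (Or.inl hm'top)).symm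
        have hcount' : m' * h x ≤ 1 + ∑' k : ℕ, (B k).indicator (fun _ => (1 : ℝ≥0∞)) x := by
          rw [← tsum_congr hrw]
          exact hcount
        calc h x = m'⁻¹ * (m' * h x) := by
              rw [← mul_assoc, ENNReal.inv_mul_cancel hm'0 hm'top, one_mul]
          _ ≤ _ := mul_le_mul_right hcount' _
      calc ∫⁻ x, h x ∂Q
          ≤ ∫⁻ x, m'⁻¹ * (1 + ∑' k : ℕ, (B k).indicator (fun _ => (1 : ℝ≥0∞)) x) ∂Q :=
            lintegral_mono hpt
        _ = m'⁻¹ * (Q Set.univ + ∑' k, Q (B k)) := by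
            rw [lintegral_const_mul _ (f := fun x => 1 + ∑' k : ℕ, (B k).indicator (fun _ => (1 : ℝ≥0∞)) x) (measurable_const.add
              (Measurable.ennreal_tsum fun k => measurable_const.indicator (hBmeas k)))]
            congr 1
            rw [lintegral_add_left measurable_const, lintegral_one]
            congr 1
            rw [lintegral_tsum fun k =>
              (measurable_const.indicator (hBmeas k)).aemeasurable]
            refine tsum_congr fun k => ?_
            rw [lintegral_indicator_const (hBmeas k), one_mul]
    have stepB : ∀ N : ℕ, m'⁻¹ * ∑ k ∈ Finset.range N, Q (B k) ≤ ∫⁻ x, Seps ε h x ∂P := by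
      intro N
      refine ENNReal.le_of_forall_pos_le_add fun δ hδ _ => ?_
      set d : ℝ≥0∞ := (δ : ℝ≥0∞) / ((N : ℝ≥0∞) + 1) with hd
      have hδ0 : (δ : ℝ≥0∞) ≠ 0 := by exact_mod_cast hδ.ne'
      have hd0 : d ≠ 0 := by
        simp only [hd, ne_eq, ENNReal.div_eq_zero_iff, not_or]
        exact ⟨hδ0, by simp⟩
      choose F hFsub hFcl hFlt using fun k : ℕ =>
        (hBmeas k).exists_isClosed_lt_add (measure_ne_top Q _) hd0
      set G : ℕ → Set E := fun k => ⋃ j ∈ Finset.Ico k N, F j with hG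
      have hGcl : ∀ k, IsClosed (G k) := fun k =>
        isClosed_biUnion_finset fun j _ => hFcl j
      have hGsub : ∀ k, G k ⊆ B k := by
        intro k
        refine Set.iUnion₂_subset fun j hj => ?_
        exact (hFsub j).trans (hBanti (Finset.mem_Ico.mp hj).1)
      have hQG : ∀ k < N, Q (B k) ≤ Q (G k) + d := by
        intro k hk
        refine (hFlt k).le.trans (add_le_add_left (measure_mono ?_) d)
        exact Set.subset_iUnion₂ (s := fun j (_ : j ∈ Finset.Ico k N) => F j) k
          (Finset.mem_Ico.mpr ⟨le_rfl, hk⟩)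
      set T : ℕ → Set E := fun k => {x | EMetric.infEdist x (G k) ≤ ENNReal.ofReal ε} with hTT
      have hTcl : ∀ k, IsClosed (T k) := fun k =>
        isClosed_le EMetric.continuous_infEdist continuous_const
      have hQT : ∀ k, Q (G k) ≤ P (T k) := fun k => winf_closed_bound hW (hGcl k)
      have hpt : ∀ x, m'⁻¹ * ∑ k ∈ Finset.range N, (T k).indicator (fun _ => (1 : ℝ≥0∞)) x
          ≤ Seps ε h x := by
        intro x
        have hsum : ∑ k ∈ Finset.range N, (T k).indicator (fun _ => (1 : ℝ≥0∞)) x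
            = (((Finset.range N).filter (fun k => x ∈ T k)).card : ℝ≥0∞) := by
          simp only [Set.indicator_apply]
          rw [Finset.sum_boole]
        set s := (Finset.range N).filter (fun k => x ∈ T k) with hs
        rw [hsum]
        rcases s.eq_empty_or_nonempty with hse | hse
        · simp [hse]
        · set K := s.max' hse with hK
          have hKs : K ∈ s := s.max'_mem hse
          have hxT : x ∈ T K := (Finset.mem_filter.mp hKs).2
          obtain ⟨y, hyG, hyball⟩ := hattain (hGcl K) hxT
          obtain ⟨j, hj, hyF⟩ : ∃ j, j ∈ Finset.Ico K N ∧ y ∈ F j := by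
            simpa [hG, Set.mem_iUnion] using hyG
          have hyB : y ∈ B j := hFsub j hyF
          have hhy : ((K : ℝ≥0∞) + 1) / m' ≤ h y := by
            refine le_trans ?_ (le_of_lt hyB)
            gcongr
            exact_mod_cast (Finset.mem_Ico.mp hj).1
          have hS : ((K : ℝ≥0∞) + 1) / m' ≤ Seps ε h x :=
            le_trans hhy (le_biSup _ hyball)
          have hcard : (s.card : ℝ≥0∞) ≤ (K : ℝ≥0∞) + 1 := by
            have hc : s.card ≤ K + 1 := by
              have hsub : s ⊆ Finset.range (K + 1) := fun k hk =>
                Finset.mem_range.mpr (Nat.lt_succ_of_le (s.le_max' k hk))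
              simpa using Finset.card_le_card hsub
            exact_mod_cast hc
          calc m'⁻¹ * (s.card : ℝ≥0∞) = (s.card : ℝ≥0∞) / m' := by
                rw [div_eq_mul_inv, mul_comm]
            _ ≤ ((K : ℝ≥0∞) + 1) / m' := by gcongr
            _ ≤ Seps ε h x := hS
      have hint : m'⁻¹ * ∑ k ∈ Finset.range N, P (T k) ≤ ∫⁻ x, Seps ε h x ∂P := by
        calc m'⁻¹ * ∑ k ∈ Finset.range N, P (T k)
            = ∫⁻ x, m'⁻¹ * ∑ k ∈ Finset.range N, (T k).indicator (fun _ => (1 : ℝ≥0∞)) x ∂P := by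
              rw [lintegral_const_mul _ (Finset.measurable_sum _ fun k _ =>
                measurable_const.indicator (hTcl k).measurableSet)]
              congr 1
              rw [lintegral_finset_sum _ fun k _ =>
                measurable_const.indicator (hTcl k).measurableSet]
              refine Finset.sum_congr rfl fun k _ => ?_
              rw [lintegral_indicator_const (hTcl k).measurableSet, one_mul]
          _ ≤ _ := lintegral_mono hpt
      calc m'⁻¹ * ∑ k ∈ Finset.range N, Q (B k)
          ≤ m'⁻¹ * ∑ k ∈ Finset.range N, (Q (G k) + d) := by
            refine mul_le_mul_right (Finset.sum_le_sum fun k hk => ?_) _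
            exact hQG k (Finset.mem_range.mp hk)
        _ = m'⁻¹ * ∑ k ∈ Finset.range N, Q (G k) + m'⁻¹ * ((N : ℝ≥0∞) * d) := by
            rw [Finset.sum_add_distrib, Finset.sum_const, Finset.card_range, mul_add,
              nsmul_eq_mul]
        _ ≤ ∫⁻ x, Seps ε h x ∂P + (δ : ℝ≥0∞) := by
            refine add_le_add ?_ ?_
            · refine le_trans (mul_le_mul_right (Finset.sum_le_sum fun k _ => hQT k) _) hint
            · have h1 : m'⁻¹ ≤ 1 := ENNReal.inv_le_one.mpr (by simp [hm'])
              calc m'⁻¹ * ((N : ℝ≥0∞) * d) ≤ 1 * ((N : ℝ≥0∞) * d) := mul_le_mul_left h1 _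
                _ = (N : ℝ≥0∞) * d := one_mul _
                _ ≤ (δ : ℝ≥0∞) := by
                    rw [hd, ← mul_div_assoc]
                    rw [ENNReal.div_le_iff_le_mul (Or.inl (by simp)) (Or.inl (by simp))]
                    rw [mul_comm ((N : ℝ≥0∞)) ((δ : ℝ≥0∞))]
                    exact mul_le_mul_right le_self_add _
    have hts : m'⁻¹ * ∑' k, Q (B k) ≤ ∫⁻ x, Seps ε h x ∂P := by
      rw [ENNReal.tsum_eq_iSup_nat, ENNReal.mul_iSup]
      exact iSup_le stepB
    calc ∫⁻ x, h x ∂Q ≤ m'⁻¹ * (Q Set.univ + ∑' k, Q (B k)) := stepA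
      _ = m'⁻¹ * Q Set.univ + m'⁻¹ * ∑' k, Q (B k) := mul_add _ _ _
      _ ≤ m'⁻¹ * Q Set.univ + ∫⁻ x, Seps ε h x ∂P := add_le_add le_rfl hts
  refine ENNReal.le_of_forall_pos_le_add fun δ hδ _ => ?_
  have hδ0 : (δ : ℝ≥0∞) ≠ 0 := by exact_mod_cast hδ.ne'
  have hQtop : Q Set.univ + 1 ≠ ⊤ := ENNReal.add_ne_top.mpr ⟨measure_ne_top Q _, ENNReal.one_ne_top⟩
  obtain ⟨n, hn⟩ := ENNReal.exists_inv_nat_lt (a := (δ : ℝ≥0∞) / (Q Set.univ + 1))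
    (by simp only [ne_eq, ENNReal.div_eq_zero_iff, not_or]; exact ⟨hδ0, hQtop⟩)
  refine le_trans (main n) ?_
  rw [add_comm]
  refine add_le_add le_rfl ?_
  calc ((n : ℝ≥0∞) + 1)⁻¹ * Q Set.univ
      ≤ ((δ : ℝ≥0∞) / (Q Set.univ + 1)) * (Q Set.univ + 1) := by
        refine mul_le_mul' ?_ le_self_add
        exact le_trans (ENNReal.inv_le_inv.mpr le_self_add) hn.le
    _ = (δ : ℝ≥0∞) := ENNReal.div_mul_cancel (by simp) hQtop

end WeakDualityAux

/-- Weak duality: the dual value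
`sup_{P₀' ∈ B_ε^∞(P₀), P₁' ∈ B_ε^∞(P₁)} ∫ C_φ*(dP₁'/d(P₀'+P₁')) d(P₀'+P₁')` is at most the
primal value `inf_{(h₀,h₁) ∈ S_φ} ∫ S_ε(h₁) dP₁ + ∫ S_ε(h₀) dP₀`. -/
theorem stmt_14 {E : Type*} [NormedAddCommGroup E] [NormedSpace ℝ E] [FiniteDimensional ℝ E]
    [MeasurableSpace E] [BorelSpace E]
    (P₀ P₁ : Measure E) [IsFiniteMeasure P₀] [IsFiniteMeasure P₁]
    (φ : EReal → ℝ≥0∞) (hmono : Antitone φ) (hlsc : LowerSemicontinuous φ)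
    (hlim : Filter.Tendsto φ Filter.atTop (nhds 0)) (ε : ℝ) (hε : 0 ≤ ε) :
    (⨆ (P₀' : Measure E) (_ : Winf P₀ P₀' ≤ ENNReal.ofReal ε)
        (P₁' : Measure E) (_ : Winf P₁ P₁' ≤ ENNReal.ofReal ε),
      ∫⁻ x, CphiStar φ ((P₁'.rnDeriv (P₀' + P₁') x).toReal) ∂(P₀' + P₁')) ≤
    ⨅ (p : (E → ℝ≥0∞) × (E → ℝ≥0∞))
      (_ : Measurable p.1 ∧ Measurable p.2 ∧
        ∀ η ∈ Set.Icc (0 : ℝ) 1, ∀ x,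
          CphiStar φ η ≤ ENNReal.ofReal η * p.2 x + ENNReal.ofReal (1 - η) * p.1 x),
      (∫⁻ x, Seps ε p.2 x ∂P₁) + ∫⁻ x, Seps ε p.1 x ∂P₀ := by
  haveI : ProperSpace E := FiniteDimensional.proper ℝ E
  refine iSup₂_le fun P₀' hW₀ => iSup₂_le fun P₁' hW₁ => le_iInf₂ fun p hp => ?_
  obtain ⟨hp1, hp2, hcons⟩ := hp
  haveI hf0 : IsFiniteMeasure P₀' := winf_finite ENNReal.ofReal_lt_top hW₀
  haveI hf1 : IsFiniteMeasure P₁' := winf_finite ENNReal.ofReal_lt_top hW₁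
  set ν : Measure E := P₀' + P₁' with hν
  have hsum : (fun x => P₀'.rnDeriv ν x + P₁'.rnDeriv ν x) =ᵐ[ν] fun _ => 1 := by
    have h1 := Measure.rnDeriv_add' P₀' P₁' ν
    have h2 := Measure.rnDeriv_self ν
    filter_upwards [h1, h2] with x hx1 hx2
    simp only [Pi.add_apply] at hx1
    rw [← hx1, ← hν, hx2]
  have hfin1 : ∀ᵐ x ∂ν, P₁'.rnDeriv ν x < ⊤ := Measure.rnDeriv_lt_top _ _
  have key_ae : ∀ᵐ x ∂ν, CphiStar φ ((P₁'.rnDeriv ν x).toReal)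
      ≤ P₁'.rnDeriv ν x * p.2 x + P₀'.rnDeriv ν x * p.1 x := by
    filter_upwards [hsum, hfin1] with x hx hxf
    have hle1 : P₁'.rnDeriv ν x ≤ 1 := by
      rw [← hx]
      exact le_add_self
    have hmem : (P₁'.rnDeriv ν x).toReal ∈ Set.Icc (0 : ℝ) 1 := by
      refine ⟨ENNReal.toReal_nonneg, ?_⟩
      have := ENNReal.toReal_mono ENNReal.one_ne_top hle1
      simpa using this
    have h := hcons _ hmem x
    rw [ENNReal.ofReal_toReal hxf.ne] at h
    have h0 : ENNReal.ofReal (1 - (P₁'.rnDeriv ν x).toReal) = P₀'.rnDeriv ν x := by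
      have hr : P₀'.rnDeriv ν x = 1 - P₁'.rnDeriv ν x :=
        ENNReal.eq_sub_of_add_eq hxf.ne hx
      rw [hr]
      rw [show (1 : ℝ) = (1 : ℝ≥0∞).toReal by simp]
      rw [← ENNReal.toReal_sub_of_le hle1 ENNReal.one_ne_top]
      exact ENNReal.ofReal_toReal (by
        exact ne_top_of_le_ne_top ENNReal.one_ne_top tsub_le_self)
    rw [h0] at h
    exact h
  have hac1 : P₁' ≪ ν := Measure.absolutelyContinuous_of_le (by rw [hν]; exact Measure.le_add_left le_rfl)
  have hac0 : P₀' ≪ ν := Measure.absolutelyContinuous_of_le (by rw [hν]; exact Measure.le_add_right le_rfl)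
  calc ∫⁻ x, CphiStar φ ((P₁'.rnDeriv ν x).toReal) ∂ν
      ≤ ∫⁻ x, (P₁'.rnDeriv ν x * p.2 x + P₀'.rnDeriv ν x * p.1 x) ∂ν :=
        lintegral_mono_ae key_ae
    _ = ∫⁻ x, P₁'.rnDeriv ν x * p.2 x ∂ν + ∫⁻ x, P₀'.rnDeriv ν x * p.1 x ∂ν :=
        lintegral_add_left ((Measure.measurable_rnDeriv _ _).mul hp2) _
    _ = ∫⁻ x, p.2 x ∂P₁' + ∫⁻ x, p.1 x ∂P₀' := by
        rw [lintegral_rnDeriv_mul hac1 hp2.aemeasurable,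
          lintegral_rnDeriv_mul hac0 hp1.aemeasurable]
    _ ≤ (∫⁻ x, Seps ε p.2 x ∂P₁) + ∫⁻ x, Seps ε p.1 x ∂P₀ :=
        add_le_add (lintegral_le_lintegral_seps hε hW₁ hp2)
          (lintegral_le_lintegral_seps hε hW₀ hp1)
end

section
/- Let ℙᵢ, ℙᵢ^{n} (i = 0,1) be finite positive Borel measures on ℝ^d with ℙᵢⁿ converging weakly to ℙᵢ, and let ℙᵢ^{*,n} be measures with W_∞(ℙᵢⁿ, ℙᵢ^{*,n}) ≤ ε converging weakly to ℙᵢ*. Then W_∞(ℙᵢ, ℙᵢ*) ≤ ε. -/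
open MeasureTheory Filter
open scoped ENNReal

section AuxiliaryMachinery

open Topology BoundedContinuousFunction Set Metric TopologicalSpace
open scoped NNReal



section Ulim

/-- Limit of an `ℝ≥0∞`-valued sequence along an ultrafilter. -/
noncomputable def ulim (U : Ultrafilter ℕ) (a : ℕ → ℝ≥0∞) : ℝ≥0∞ :=
  (U.map a).lim

lemma tendsto_ulim (U : Ultrafilter ℕ) (a : ℕ → ℝ≥0∞) : Tendsto a ↑U (𝓝 (ulim U a)) :=
  (U.map a).le_nhds_lim

lemma ulim_eq {U : Ultrafilter ℕ} {a : ℕ → ℝ≥0∞} {x : ℝ≥0∞} (h : Tendsto a ↑U (𝓝 x)) :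
    ulim U a = x :=
  tendsto_nhds_unique (tendsto_ulim U a) h

lemma ulim_const (U : Ultrafilter ℕ) (c : ℝ≥0∞) : ulim U (fun _ => c) = c :=
  ulim_eq tendsto_const_nhds

lemma ulim_add (U : Ultrafilter ℕ) (a b : ℕ → ℝ≥0∞) :
    ulim U (fun n => a n + b n) = ulim U a + ulim U b :=
  ulim_eq ((tendsto_ulim U a).add (tendsto_ulim U b))

lemma ulim_mono {U : Ultrafilter ℕ} {a b : ℕ → ℝ≥0∞} (h : ∀ n, a n ≤ b n) :
    ulim U a ≤ ulim U b :=
  le_of_tendsto_of_tendsto' (tendsto_ulim U a) (tendsto_ulim U b) h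

lemma ulim_le {U : Ultrafilter ℕ} {a : ℕ → ℝ≥0∞} {c : ℝ≥0∞} (h : ∀ n, a n ≤ c) :
    ulim U a ≤ c := by
  simpa [ulim_const U c] using ulim_mono (b := fun _ => c) (U := U) h

end Ulim

section BCF
variable {X : Type*} [TopologicalSpace X]
lemma nnreal_dist_le {a b M : ℝ≥0} (ha : a ≤ M) (hb : b ≤ M) : dist a b ≤ (M : ℝ) := by
  rw [NNReal.dist_eq, abs_sub_le_iff]
  constructor
  · have : (a : ℝ) ≤ M := ha
    have hb' : (0:ℝ) ≤ b := b.coe_nonneg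
    linarith
  · have : (b : ℝ) ≤ M := hb
    have ha' : (0:ℝ) ≤ a := a.coe_nonneg
    linarith
lemma bcnn_apply_le (f : X →ᵇ ℝ≥0) (x : X) : f x ≤ nndist f 0 := by
  have h := dist_coe_le_dist (f := f) (g := 0) x
  have h0 : dist (f x) ((0 : X →ᵇ ℝ≥0) x) = dist (f x) 0 := by norm_num
  rw [h0] at h
  rw [NNReal.dist_eq, NNReal.coe_zero, sub_zero, abs_of_nonneg (f x).coe_nonneg] at h
  exact_mod_cast h.trans (le_of_eq rfl)
noncomputable def toBCNN (h : C(X, ℝ)) (h01 : ∀ z, h z ∈ Icc (0:ℝ) 1) : X →ᵇ ℝ≥0 :=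
  ⟨⟨fun z => (h z).toNNReal, continuous_real_toNNReal.comp h.continuous⟩,
    ⟨1, fun x y => by
      apply nnreal_dist_le (M := 1) <;>
      · rw [← NNReal.coe_le_coe, Real.coe_toNNReal _ (h01 _).1]
        exact_mod_cast (h01 _).2⟩⟩
@[simp] lemma toBCNN_apply (h : C(X, ℝ)) (h01 : ∀ z, h z ∈ Icc (0:ℝ) 1) (z : X) :
    toBCNN h h01 z = (h z).toNNReal := rfl
noncomputable def bcnnMul (f g : X →ᵇ ℝ≥0) : X →ᵇ ℝ≥0 :=
  ⟨⟨fun z => f z * g z, f.continuous.mul g.continuous⟩,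
    ⟨nndist f 0 * nndist g 0, fun x y => by
      apply nnreal_dist_le (M := nndist f 0 * nndist g 0) <;>
      · exact mul_le_mul' (bcnn_apply_le f _) (bcnn_apply_le g _)⟩⟩
@[simp] lemma bcnnMul_apply (f g : X →ᵇ ℝ≥0) (z : X) : bcnnMul f g z = f z * g z := rfl
end BCF

section FunContent

variable {X : Type*} [MetricSpace X] (L : (X →ᵇ ℝ≥0) → ℝ≥0∞)

/-- The "content" associated to a positive functional on bounded continuous functions. -/
noncomputable def preContent (K : Compacts X) : ℝ≥0∞ :=
  ⨅ (f : X →ᵇ ℝ≥0) (_ : ∀ x ∈ (K : Set X), (1:ℝ≥0) ≤ f x), L f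

lemma preContent_le {K : Compacts X} {f : X →ᵇ ℝ≥0} (hf : ∀ x ∈ (K : Set X), (1:ℝ≥0) ≤ f x) :
    preContent L K ≤ L f :=
  iInf₂_le f hf

lemma le_preContent {K : Compacts X} {m : ℝ≥0∞}
    (h : ∀ f : X →ᵇ ℝ≥0, (∀ x ∈ (K : Set X), (1:ℝ≥0) ≤ f x) → m ≤ L f) :
    m ≤ preContent L K :=
  le_iInf₂ h

variable (hfin1 : L (BoundedContinuousFunction.const X (1:ℝ≥0)) ≠ ⊤)

include hfin1 in
lemma preContent_ne_top (K : Compacts X) : preContent L K ≠ ⊤ :=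
  ne_top_of_le_ne_top hfin1 (preContent_le L (by simp))

variable (hadd : ∀ f g : X →ᵇ ℝ≥0, L (f + g) = L f + L g)

include hadd hfin1 in
lemma preContent_sup_le (K₁ K₂ : Compacts X) :
    preContent L (K₁ ⊔ K₂) ≤ preContent L K₁ + preContent L K₂ := by
  refine ENNReal.le_of_forall_pos_le_add fun η hη hlt => ?_
  have h₁ : preContent L K₁ < preContent L K₁ + (η/2 : ℝ≥0) :=
    ENNReal.lt_add_right (preContent_ne_top L hfin1 K₁) (by exact_mod_cast (half_pos hη).ne')
  have h₂ : preContent L K₂ < preContent L K₂ + (η/2 : ℝ≥0) :=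
    ENNReal.lt_add_right (preContent_ne_top L hfin1 K₂) (by exact_mod_cast (half_pos hη).ne')
  rw [preContent, iInf_lt_iff] at h₁ h₂
  obtain ⟨f₁, hf₁⟩ := h₁
  obtain ⟨f₂, hf₂⟩ := h₂
  rw [iInf_lt_iff] at hf₁ hf₂
  obtain ⟨hf₁K, hf₁lt⟩ := hf₁
  obtain ⟨hf₂K, hf₂lt⟩ := hf₂
  have hsum : ∀ x ∈ (↑(K₁ ⊔ K₂) : Set X), (1:ℝ≥0) ≤ (f₁ + f₂) x := by
    rintro x (hx | hx)
    · calc (1:ℝ≥0) ≤ f₁ x := hf₁K x hx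
        _ ≤ f₁ x + f₂ x := le_self_add
        _ = (f₁ + f₂) x := rfl
    · calc (1:ℝ≥0) ≤ f₂ x := hf₂K x hx
        _ ≤ f₁ x + f₂ x := le_add_self
        _ = (f₁ + f₂) x := rfl
  calc preContent L (K₁ ⊔ K₂) ≤ L (f₁ + f₂) := preContent_le L hsum
    _ = L f₁ + L f₂ := hadd f₁ f₂
    _ ≤ (preContent L K₁ + (η/2 : ℝ≥0)) + (preContent L K₂ + (η/2 : ℝ≥0)) :=
        add_le_add hf₁lt.le hf₂lt.le
    _ = preContent L K₁ + preContent L K₂ + (((η/2 : ℝ≥0) : ℝ≥0∞) + ((η/2 : ℝ≥0) : ℝ≥0∞)) := by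
        ring
    _ = preContent L K₁ + preContent L K₂ + η := by
        rw [← ENNReal.coe_add]
        norm_num

include hadd in
lemma preContent_sup_disjoint (K₁ K₂ : Compacts X) (hd : Disjoint (K₁ : Set X) K₂) :
    preContent L K₁ + preContent L K₂ ≤ preContent L (K₁ ⊔ K₂) := by
  obtain ⟨h, h1, h2, h01⟩ := exists_continuous_zero_one_of_isClosed
    K₁.isCompact.isClosed K₂.isCompact.isClosed hd
  have h01' : ∀ z, ((1 : C(X,ℝ)) - h) z ∈ Icc (0:ℝ) 1 := by
    intro z
    have := h01 z
    simp only [ContinuousMap.sub_apply, ContinuousMap.one_apply]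
    constructor <;> [linarith [this.2]; linarith [this.1]]
  refine le_preContent L fun f hf => ?_
  set g₁ : X →ᵇ ℝ≥0 := bcnnMul f (toBCNN ((1 : C(X,ℝ)) - h) h01') with hg₁
  set g₂ : X →ᵇ ℝ≥0 := bcnnMul f (toBCNN h h01) with hg₂
  have hsplit : g₁ + g₂ = f := by
    ext z
    have hz := h01 z
    simp only [BoundedContinuousFunction.coe_add, Pi.add_apply, hg₁, hg₂, bcnnMul_apply,
      toBCNN_apply, ContinuousMap.sub_apply, ContinuousMap.one_apply]
    rw [← mul_add, ← Real.toNNReal_add (by linarith [hz.2]) hz.1]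
    norm_num
  have hK₁ : ∀ x ∈ (K₁ : Set X), (1:ℝ≥0) ≤ g₁ x := by
    intro x hx
    have hfx := hf x (Set.mem_union_left _ hx)
    have : h x = 0 := h1 hx
    simp [hg₁, this, hfx]
  have hK₂ : ∀ x ∈ (K₂ : Set X), (1:ℝ≥0) ≤ g₂ x := by
    intro x hx
    have hfx := hf x (Set.mem_union_right _ hx)
    have : h x = 1 := h2 hx
    simp [hg₂, this, hfx]
  calc preContent L K₁ + preContent L K₂ ≤ L g₁ + L g₂ :=
        add_le_add (preContent_le L hK₁) (preContent_le L hK₂)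
    _ = L (g₁ + g₂) := (hadd g₁ g₂).symm
    _ = L f := by rw [hsplit]

/-- The content induced by a positive additive functional. -/
noncomputable def funContent : Content X where
  toFun K := (preContent L K).toNNReal
  mono' K₁ K₂ hK := by
    apply ENNReal.toNNReal_mono (preContent_ne_top L hfin1 K₂)
    exact le_iInf₂ fun f hf => preContent_le L (fun x hx => hf x (hK hx))
  sup_disjoint' K₁ K₂ hd _ _ := by
    have hle := preContent_sup_le L hfin1 hadd K₁ K₂
    have hge := preContent_sup_disjoint L hadd K₁ K₂ hd
    have : preContent L (K₁ ⊔ K₂) = preContent L K₁ + preContent L K₂ := le_antisymm hle hge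
    show (preContent L (K₁ ⊔ K₂)).toNNReal = (preContent L K₁).toNNReal + (preContent L K₂).toNNReal
    rw [this, ENNReal.toNNReal_add (preContent_ne_top L hfin1 _) (preContent_ne_top L hfin1 _)]
  sup_le' K₁ K₂ := by
    have hle := preContent_sup_le L hfin1 hadd K₁ K₂
    show (preContent L (K₁ ⊔ K₂)).toNNReal ≤ (preContent L K₁).toNNReal + (preContent L K₂).toNNReal
    rw [← ENNReal.toNNReal_add (preContent_ne_top L hfin1 _) (preContent_ne_top L hfin1 _)]
    exact ENNReal.toNNReal_mono
      (by simp [ENNReal.add_ne_top, preContent_ne_top L hfin1]) hle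

lemma funContent_apply (K : Compacts X) :
    (funContent L hfin1 hadd K : ℝ≥0∞) = preContent L K := by
  simp only [funContent, Content.mk_apply]
  exact ENNReal.coe_toNNReal (preContent_ne_top L hfin1 K)

end FunContent

section Tight

variable {D : ℕ}

/-- Escape of mass to infinity for a single finite measure on `ℝ^D`. -/
lemma single_tight (ν : Measure (Fin D → ℝ)) [IsFiniteMeasure ν] {η : ℝ≥0∞} (hη : 0 < η) :
    ∃ j : ℕ, ν (Metric.closedBall (0 : Fin D → ℝ) j)ᶜ < η := by
  have hmeas : ∀ j : ℕ, NullMeasurableSet ((Metric.closedBall (0 : Fin D → ℝ) j)ᶜ) ν :=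
    fun j => (isClosed_closedBall.measurableSet.compl).nullMeasurableSet
  have hanti : Antitone fun j : ℕ => (Metric.closedBall (0 : Fin D → ℝ) j)ᶜ := by
    intro i j hij
    exact Set.compl_subset_compl.2 (Metric.closedBall_subset_closedBall (by exact_mod_cast hij))
  have hstar : (⋂ j : ℕ, (Metric.closedBall (0 : Fin D → ℝ) j)ᶜ) = ∅ := by
    ext x
    simp only [Set.mem_iInter, Set.mem_compl_iff, Metric.mem_closedBall, Set.mem_empty_iff_false,
      iff_false, not_forall, not_not]
    obtain ⟨j, hj⟩ := exists_nat_ge (dist x 0)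
    exact ⟨j, hj⟩
  have := tendsto_measure_iInter_atTop hmeas hanti ⟨0, (measure_lt_top ν _).ne⟩
  rw [hstar] at this
  simp only [measure_empty] at this
  have := this.eventually_lt_const hη
  obtain ⟨j, hj⟩ := this.exists
  exact ⟨j, hj⟩

/-- A weakly convergent sequence of finite measures on `ℝ^D` is uniformly tight. -/
lemma seq_tight (μs : ℕ → FiniteMeasure (Fin D → ℝ)) (μ : FiniteMeasure (Fin D → ℝ))
    (h : Tendsto μs atTop (𝓝 μ)) {η : ℝ≥0∞} (hη : 0 < η) :
    ∃ K : Set (Fin D → ℝ), IsCompact K ∧ ∀ n, (μs n : Measure (Fin D → ℝ)) Kᶜ ≤ η := by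
  obtain ⟨j₀, hj₀⟩ := single_tight (μ : Measure (Fin D → ℝ)) hη
  set F : Set (Fin D → ℝ) := (Metric.ball (0 : Fin D → ℝ) (j₀+1))ᶜ with hF
  have hFclosed : IsClosed F := Metric.isOpen_ball.isClosed_compl
  have hFsub : F ⊆ (Metric.closedBall (0 : Fin D → ℝ) j₀)ᶜ := by
    apply Set.compl_subset_compl.2
    intro x hx
    rw [Metric.mem_closedBall] at hx
    rw [Metric.mem_ball]
    linarith
  have hμF : (μ : Measure (Fin D → ℝ)) F < η :=
    lt_of_le_of_lt (measure_mono hFsub) hj₀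
  have hlimsup : atTop.limsup (fun n => (μs n : Measure (Fin D → ℝ)) F) < η :=
    lt_of_le_of_lt (FiniteMeasure.limsup_measure_closed_le_of_tendsto h hFclosed) hμF
  have hev : ∀ᶠ n in atTop, (μs n : Measure (Fin D → ℝ)) F < η :=
    eventually_lt_of_limsup_lt hlimsup
  obtain ⟨N, hN⟩ := eventually_atTop.1 hev
  -- a radius working for every `n < N`
  have hsmall : ∀ n, ∃ j : ℕ, ((μs n : Measure (Fin D → ℝ))) (Metric.closedBall (0:Fin D → ℝ) j)ᶜ < η :=
    fun n => single_tight _ hη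
  choose js hjs using hsmall
  set J : ℕ := max (j₀+1) ((Finset.range N).sup js) with hJ
  refine ⟨Metric.closedBall 0 J, isCompact_closedBall _ _, fun n => ?_⟩
  rcases le_or_gt N n with hn | hn
  · refine le_trans (measure_mono ?_) (hN n hn).le
    apply Set.compl_subset_compl.2
    intro x hx
    rw [Metric.mem_ball] at hx
    rw [Metric.mem_closedBall]
    have : ((j₀+1 : ℕ) : ℝ) ≤ (J : ℝ) := by exact_mod_cast le_max_left _ _
    push_cast at this ⊢
    linarith
  · refine le_trans (measure_mono ?_) (hjs n).le
    apply Set.compl_subset_compl.2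
    apply Metric.closedBall_subset_closedBall
    have : js n ≤ J := le_trans (Finset.le_sup (Finset.mem_range.2 hn)) (le_max_right _ _)
    exact_mod_cast this

end Tight

/-- A measure dominated by a finite measure with at least the same total mass equals it. -/
lemma measure_eq_of_le_of_univ_le {α : Type*} [MeasurableSpace α] {μ ν : Measure α}
    [IsFiniteMeasure ν] (hle : ∀ A, MeasurableSet A → μ A ≤ ν A) (hmass : ν univ ≤ μ univ) :
    μ = ν := by
  ext A hA
  refine le_antisymm (hle A hA) ?_
  have h1 : ν A + ν Aᶜ = ν univ := measure_add_measure_compl hA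
  have h2 : μ A + μ Aᶜ = μ univ := measure_add_measure_compl hA
  have h3 : μ univ ≤ ν univ := hle univ MeasurableSet.univ
  have hμuniv : μ univ = ν univ := le_antisymm h3 hmass
  have hcompl : μ Aᶜ ≤ ν Aᶜ := hle _ hA.compl
  have : ν A + ν Aᶜ ≤ μ A + ν Aᶜ := by
    calc ν A + ν Aᶜ = μ univ := by rw [h1, hμuniv]
      _ = μ A + μ Aᶜ := h2.symm
      _ ≤ μ A + ν Aᶜ := add_le_add_right hcompl _
  exact (ENNReal.add_le_add_iff_right (measure_lt_top ν Aᶜ).ne).1 this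

/-- To dominate an outer regular measure it is enough to dominate on preimages of open sets. -/
lemma map_le_of_forall_open {Z α : Type*} [MeasurableSpace Z] [MeasurableSpace α]
    [TopologicalSpace α] [OpensMeasurableSpace α] {γ : Measure Z} {ν : Measure α}
    [ν.OuterRegular] {pr : Z → α} (hpr : Measurable pr)
    (h : ∀ U : Set α, IsOpen U → γ (pr ⁻¹' U) ≤ ν U) :
    ∀ A, MeasurableSet A → γ.map pr A ≤ ν A := by
  intro A hA
  rw [Measure.map_apply hpr hA]
  refine le_of_forall_gt_imp_ge_of_dense fun r hr => ?_
  obtain ⟨U, hAU, hUopen, hU⟩ := Set.exists_isOpen_lt_of_lt A r hr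
  exact le_trans (le_trans (measure_mono (Set.preimage_mono hAU)) (h U hUopen)) hU.le

section Main

variable {d : ℕ}

local notation "E" => (Fin d → ℝ)
local notation "Z" => ((Fin d → ℝ) × (Fin d → ℝ))

/-- Weak limits of couplings concentrated on the `c`-tube give a coupling of the limits,
still concentrated on the `c`-tube. -/
lemma exists_limit_coupling (Pn Pstarn : ℕ → FiniteMeasure E) (P Pstar : FiniteMeasure E)
    (h1 : Tendsto Pn atTop (𝓝 P)) (h2 : Tendsto Pstarn atTop (𝓝 Pstar))
    (γs : ℕ → Measure Z)
    (hmf : ∀ n, (γs n).map Prod.fst = (Pn n : Measure E))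
    (hms : ∀ n, (γs n).map Prod.snd = (Pstarn n : Measure E))
    {c : ℝ≥0∞}
    (hess : ∀ n, ∀ᵐ z ∂(γs n), (‖z.1 - z.2‖₊ : ℝ≥0∞) ≤ c) :
    ∃ γ : Measure Z,
      γ.map Prod.fst = (P : Measure E) ∧ γ.map Prod.snd = (Pstar : Measure E) ∧
      ∀ᵐ z ∂γ, (‖z.1 - z.2‖₊ : ℝ≥0∞) ≤ c := by
  classical
  set U : Ultrafilter ℕ := Ultrafilter.of atTop with hUdef
  have hU : (U : Filter ℕ) ≤ atTop := Ultrafilter.of_le _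
  -- the limit functional
  set L : (Z →ᵇ ℝ≥0) → ℝ≥0∞ :=
    fun f => ulim U (fun n => ∫⁻ z, (f z : ℝ≥0∞) ∂(γs n)) with hLdef
  have hmeasf : ∀ f : Z →ᵇ ℝ≥0, Measurable fun z => (f z : ℝ≥0∞) :=
    fun f => f.continuous.measurable.coe_nnreal_ennreal
  have hadd : ∀ f g : Z →ᵇ ℝ≥0, L (f + g) = L f + L g := by
    intro f g
    have : (fun n => ∫⁻ z, ((f + g) z : ℝ≥0∞) ∂(γs n))
        = fun n => (∫⁻ z, (f z : ℝ≥0∞) ∂(γs n)) + ∫⁻ z, (g z : ℝ≥0∞) ∂(γs n) := by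
      funext n
      rw [← lintegral_add_left (hmeasf f)]
      apply lintegral_congr
      intro z
      simp
    rw [hLdef]
    simp only [this]
    exact ulim_add U _ _
  -- masses
  have hmass : ∀ n, γs n Set.univ = (Pn n : Measure E) Set.univ := by
    intro n
    rw [← hmf n, Measure.map_apply measurable_fst MeasurableSet.univ, Set.preimage_univ]
  have hmass_tendsto : Tendsto (fun n => (Pn n : Measure E) Set.univ) atTop
      (𝓝 ((P : Measure E) Set.univ)) := by
    have := (FiniteMeasure.tendsto_iff_forall_lintegral_tendsto.mp h1)
      (BoundedContinuousFunction.const E (1 : ℝ≥0))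
    simpa using this
  have hLone : L (BoundedContinuousFunction.const Z (1:ℝ≥0)) = (P : Measure E) Set.univ := by
    rw [hLdef]
    apply ulim_eq
    have : (fun n => ∫⁻ z, ((BoundedContinuousFunction.const Z (1:ℝ≥0)) z : ℝ≥0∞) ∂(γs n))
        = fun n => (Pn n : Measure E) Set.univ := by
      funext n
      simp [hmass n]
    rw [this]
    exact hmass_tendsto.mono_left hU
  have hfin1 : L (BoundedContinuousFunction.const Z (1:ℝ≥0)) ≠ ⊤ := by
    rw [hLone]; exact (measure_lt_top _ _).ne
  -- the content and its measure
  set μc : Content Z := funContent L hfin1 hadd with hμcdef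
  set γ : Measure Z := μc.measure with hγdef
  have hγ_open : ∀ (V : Set Z) (hV : IsOpen V),
      γ V = ⨆ (K : Compacts Z) (_ : (K : Set Z) ⊆ V), preContent L K := by
    intro V hV
    rw [hγdef, μc.measure_apply hV.measurableSet, μc.outerMeasure_of_isOpen V hV]
    rw [Content.innerContent]
    congr 1
    funext K
    congr 1
    funext hK
    exact funContent_apply L hfin1 hadd K
  -- upper bounds for marginals on open sets
  have key_fst : ∀ (Uo : Set E), IsOpen Uo → γ (Prod.fst ⁻¹' Uo) ≤ (P : Measure E) Uo := by
    intro Uo hUo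
    rw [hγ_open _ (hUo.preimage continuous_fst)]
    refine iSup₂_le fun K hK => ?_
    have hK₁ : IsCompact (Prod.fst '' (K : Set Z)) := K.isCompact.image continuous_fst
    have hdisj : Disjoint (Uoᶜ) (Prod.fst '' (K : Set Z)) := by
      rw [Set.disjoint_left]
      rintro x hx ⟨z, hz, rfl⟩
      exact hx (hK hz)
    obtain ⟨φ, hφ0, hφ1, hφ01⟩ := exists_continuous_zero_one_of_isClosed
      hUo.isClosed_compl hK₁.isClosed hdisj
    set φ' : E →ᵇ ℝ≥0 := toBCNN φ hφ01 with hφ'def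
    set ψ : Z →ᵇ ℝ≥0 := φ'.compContinuous ⟨Prod.fst, continuous_fst⟩ with hψdef
    have hψK : ∀ z ∈ (K : Set Z), (1:ℝ≥0) ≤ ψ z := by
      intro z hz
      have h1 : φ z.1 = 1 := hφ1 ⟨z, hz, rfl⟩
      show (1:ℝ≥0) ≤ (φ z.1).toNNReal
      rw [h1]
      norm_num
    refine le_trans (preContent_le L hψK) ?_
    have hLψ : L ψ = ∫⁻ x, (φ' x : ℝ≥0∞) ∂(P : Measure E) := by
      rw [hLdef]
      apply ulim_eq
      have heq : (fun n => ∫⁻ z, (ψ z : ℝ≥0∞) ∂(γs n))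
          = fun n => ∫⁻ x, (φ' x : ℝ≥0∞) ∂(Pn n : Measure E) := by
        funext n
        rw [← hmf n, lintegral_map φ'.continuous.measurable.coe_nnreal_ennreal measurable_fst]
        rfl
      rw [heq]
      exact ((FiniteMeasure.tendsto_iff_forall_lintegral_tendsto.mp h1) φ').mono_left hU
    rw [hLψ]
    calc ∫⁻ x, (φ' x : ℝ≥0∞) ∂(P : Measure E)
        ≤ ∫⁻ x, (Uo.indicator (fun _ => (1:ℝ≥0∞)) x) ∂(P : Measure E) := by
          apply lintegral_mono
          intro x
          by_cases hx : x ∈ Uo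
          · simp only [Set.indicator_of_mem hx, hφ'def, toBCNN_apply]
            have h1' : (φ x).toNNReal ≤ 1 := by
              rw [← Real.toNNReal_one]
              exact Real.toNNReal_mono (hφ01 x).2
            exact_mod_cast h1'
          · have : φ x = 0 := hφ0 hx
            simp [Set.indicator_of_notMem hx, hφ'def, this]
      _ = (P : Measure E) Uo := lintegral_indicator_one hUo.measurableSet
  -- snd marginal upper bound on open sets
  have key_snd : ∀ (Uo : Set E), IsOpen Uo → γ (Prod.snd ⁻¹' Uo) ≤ (Pstar : Measure E) Uo := by
    intro Uo hUo
    rw [hγ_open _ (hUo.preimage continuous_snd)]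
    refine iSup₂_le fun K hK => ?_
    have hK₁ : IsCompact (Prod.snd '' (K : Set Z)) := K.isCompact.image continuous_snd
    have hdisj : Disjoint (Uoᶜ) (Prod.snd '' (K : Set Z)) := by
      rw [Set.disjoint_left]
      rintro x hx ⟨z, hz, rfl⟩
      exact hx (hK hz)
    obtain ⟨φ, hφ0, hφ1, hφ01⟩ := exists_continuous_zero_one_of_isClosed
      hUo.isClosed_compl hK₁.isClosed hdisj
    set φ' : E →ᵇ ℝ≥0 := toBCNN φ hφ01 with hφ'def
    set ψ : Z →ᵇ ℝ≥0 := φ'.compContinuous ⟨Prod.snd, continuous_snd⟩ with hψdef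
    have hψK : ∀ z ∈ (K : Set Z), (1:ℝ≥0) ≤ ψ z := by
      intro z hz
      have h1 : φ z.2 = 1 := hφ1 ⟨z, hz, rfl⟩
      show (1:ℝ≥0) ≤ (φ z.2).toNNReal
      rw [h1]
      norm_num
    refine le_trans (preContent_le L hψK) ?_
    have hLψ : L ψ = ∫⁻ x, (φ' x : ℝ≥0∞) ∂(Pstar : Measure E) := by
      rw [hLdef]
      apply ulim_eq
      have heq : (fun n => ∫⁻ z, (ψ z : ℝ≥0∞) ∂(γs n))
          = fun n => ∫⁻ x, (φ' x : ℝ≥0∞) ∂(Pstarn n : Measure E) := by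
        funext n
        rw [← hms n, lintegral_map φ'.continuous.measurable.coe_nnreal_ennreal measurable_snd]
        rfl
      rw [heq]
      exact ((FiniteMeasure.tendsto_iff_forall_lintegral_tendsto.mp h2) φ').mono_left hU
    rw [hLψ]
    calc ∫⁻ x, (φ' x : ℝ≥0∞) ∂(Pstar : Measure E)
        ≤ ∫⁻ x, (Uo.indicator (fun _ => (1:ℝ≥0∞)) x) ∂(Pstar : Measure E) := by
          apply lintegral_mono
          intro x
          by_cases hx : x ∈ Uo
          · simp only [Set.indicator_of_mem hx, hφ'def, toBCNN_apply]
            have h1' : (φ x).toNNReal ≤ 1 := by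
              rw [← Real.toNNReal_one]
              exact Real.toNNReal_mono (hφ01 x).2
            exact_mod_cast h1'
          · have : φ x = 0 := hφ0 hx
            simp [Set.indicator_of_notMem hx, hφ'def, this]
      _ = (Pstar : Measure E) Uo := lintegral_indicator_one hUo.measurableSet
  -- the measure γ is finite
  have hγ_fin : γ Set.univ ≤ (P : Measure E) Set.univ := by
    rw [hγ_open Set.univ isOpen_univ]
    refine iSup₂_le fun K _ => ?_
    refine le_trans (preContent_le L (f := BoundedContinuousFunction.const Z (1:ℝ≥0))
      (fun x _ => by simp)) ?_
    rw [hLone]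
  haveI hfinγ : IsFiniteMeasure γ :=
    ⟨lt_of_le_of_lt hγ_fin (measure_lt_top _ _)⟩
  -- mass lower bound
  have hγuniv_ge : (P : Measure E) Set.univ ≤ γ Set.univ := by
    refine ENNReal.le_of_forall_pos_le_add fun η hη hlt => ?_
    have hη2 : (0:ℝ≥0∞) < (η:ℝ≥0∞)/2 :=
      ENNReal.half_pos (by exact_mod_cast hη.ne')
    obtain ⟨K₁, hK₁c, hK₁⟩ := seq_tight Pn P h1 hη2
    obtain ⟨K₂, hK₂c, hK₂⟩ := seq_tight Pstarn Pstar h2 hη2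
    set K : Set Z := K₁ ×ˢ K₂ with hKdef
    have hKc : IsCompact K := hK₁c.prod hK₂c
    have hKm : MeasurableSet K := hKc.isClosed.measurableSet
    have hcompl : ∀ n, γs n Kᶜ ≤ (η:ℝ≥0∞) := by
      intro n
      have hsub : Kᶜ ⊆ (Prod.fst ⁻¹' K₁ᶜ) ∪ (Prod.snd ⁻¹' K₂ᶜ) := by
        intro z hz
        simp only [hKdef, Set.mem_compl_iff, Set.mem_prod, not_and_or] at hz
        rcases hz with h | h
        · exact Or.inl h
        · exact Or.inr h
      calc γs n Kᶜ ≤ γs n (Prod.fst ⁻¹' K₁ᶜ) + γs n (Prod.snd ⁻¹' K₂ᶜ) :=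
            le_trans (measure_mono hsub) (measure_union_le _ _)
        _ = (Pn n : Measure E) K₁ᶜ + (Pstarn n : Measure E) K₂ᶜ := by
            rw [← hmf n, ← hms n,
              Measure.map_apply measurable_fst hK₁c.isClosed.measurableSet.compl,
              Measure.map_apply measurable_snd hK₂c.isClosed.measurableSet.compl]
        _ ≤ (η:ℝ≥0∞)/2 + (η:ℝ≥0∞)/2 := add_le_add (hK₁ n) (hK₂ n)
        _ = (η:ℝ≥0∞) := ENNReal.add_halves _
    have huniv_le : ∀ n, γs n Set.univ ≤ γs n K + (η:ℝ≥0∞) := by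
      intro n
      rw [← measure_add_measure_compl hKm]
      exact add_le_add_right (hcompl n) _
    have hPuniv : (P : Measure E) Set.univ = ulim U (fun n => γs n Set.univ) := by
      symm
      apply ulim_eq
      have heq : (fun n => γs n Set.univ) = fun n => (Pn n : Measure E) Set.univ :=
        funext hmass
      rw [heq]
      exact hmass_tendsto.mono_left hU
    have step : (P : Measure E) Set.univ ≤ ulim U (fun n => γs n K) + (η:ℝ≥0∞) := by
      rw [hPuniv]
      calc ulim U (fun n => γs n Set.univ) ≤ ulim U (fun n => γs n K + (η:ℝ≥0∞)) :=
            ulim_mono huniv_le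
        _ = ulim U (fun n => γs n K) + (η:ℝ≥0∞) := by
            rw [ulim_add U _ (fun _ => (η:ℝ≥0∞)), ulim_const]
    refine le_trans step (add_le_add_left ?_ _)
    have h1' : ulim U (fun n => γs n K) ≤ preContent L ⟨K, hKc⟩ := by
      refine le_preContent L fun f hf => ?_
      refine ulim_mono fun n => ?_
      calc γs n K = ∫⁻ _ in K, (1:ℝ≥0∞) ∂(γs n) := (setLIntegral_one _).symm
        _ ≤ ∫⁻ z in K, (f z : ℝ≥0∞) ∂(γs n) :=
            setLIntegral_mono (hmeasf f) (fun z hz => by exact_mod_cast hf z hz)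
        _ ≤ ∫⁻ z, (f z : ℝ≥0∞) ∂(γs n) := setLIntegral_le_lintegral _ _
    refine le_trans h1' ?_
    rw [hγ_open Set.univ isOpen_univ]
    exact le_iSup₂ (f := fun (K' : Compacts Z) (_ : (K' : Set Z) ⊆ Set.univ) => preContent L K')
      ⟨K, hKc⟩ (Set.subset_univ K)
  -- the marginals
  have hmap_fst : γ.map Prod.fst = (P : Measure E) := by
    apply measure_eq_of_le_of_univ_le (map_le_of_forall_open measurable_fst key_fst)
    rw [Measure.map_apply measurable_fst MeasurableSet.univ, Set.preimage_univ]
    exact hγuniv_ge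
  have hmap_snd : γ.map Prod.snd = (Pstar : Measure E) := by
    apply measure_eq_of_le_of_univ_le (map_le_of_forall_open measurable_snd key_snd)
    rw [Measure.map_apply measurable_snd MeasurableSet.univ, Set.preimage_univ]
    have hmass' : ∀ n, γs n Set.univ = (Pstarn n : Measure E) Set.univ := by
      intro n
      rw [← hms n, Measure.map_apply measurable_snd MeasurableSet.univ, Set.preimage_univ]
    have hmass_tendsto' : Tendsto (fun n => (Pstarn n : Measure E) Set.univ) atTop
        (𝓝 ((Pstar : Measure E) Set.univ)) := by
      have := (FiniteMeasure.tendsto_iff_forall_lintegral_tendsto.mp h2)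
        (BoundedContinuousFunction.const E (1 : ℝ≥0))
      simpa using this
    have hPQ : (Pstar : Measure E) Set.univ = (P : Measure E) Set.univ := by
      have t1 : Tendsto (fun n => γs n Set.univ) atTop (𝓝 ((P : Measure E) Set.univ)) := by
        rw [funext hmass]
        exact hmass_tendsto
      have t2 : Tendsto (fun n => γs n Set.univ) atTop (𝓝 ((Pstar : Measure E) Set.univ)) := by
        rw [funext hmass']
        exact hmass_tendsto'
      exact tendsto_nhds_unique t2 t1
    rw [hPQ]
    exact hγuniv_ge
  -- concentration on the tube
  set T : Set Z := {z | (‖z.1 - z.2‖₊ : ℝ≥0∞) ≤ c} with hTdef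
  have hTclosed : IsClosed T := by
    have hcont : Continuous fun z : Z => (‖z.1 - z.2‖₊ : ℝ≥0∞) :=
      ENNReal.continuous_coe.comp (continuous_fst.sub continuous_snd).nnnorm
    exact isClosed_le hcont continuous_const
  have hγT : γ Tᶜ = 0 := by
    refine le_antisymm ?_ zero_le
    rw [hγ_open Tᶜ hTclosed.isOpen_compl]
    refine iSup₂_le fun K hK => ?_
    have hdisj : Disjoint T (K : Set Z) := by
      rw [Set.disjoint_left]
      intro z hz hzK
      exact (hK hzK) hz
    obtain ⟨φZ, hφ0, hφ1, hφ01⟩ := exists_continuous_zero_one_of_isClosed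
      hTclosed K.isCompact.isClosed hdisj
    set ψ : Z →ᵇ ℝ≥0 := toBCNN φZ hφ01 with hψdef
    have hψ1 : ∀ z ∈ (K : Set Z), (1:ℝ≥0) ≤ ψ z := by
      intro z hz
      show (1:ℝ≥0) ≤ (φZ z).toNNReal
      have h1 : φZ z = 1 := hφ1 hz
      rw [h1]
      norm_num
    refine le_trans (preContent_le L hψ1) (le_of_eq ?_)
    have hint : ∀ n, ∫⁻ z, (ψ z : ℝ≥0∞) ∂(γs n) = 0 := by
      intro n
      have hae : ∀ᵐ z ∂(γs n), (ψ z : ℝ≥0∞) = 0 := by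
        refine (hess n).mono fun z hz => ?_
        have hzT : z ∈ T := hz
        show (((φZ z).toNNReal : ℝ≥0) : ℝ≥0∞) = 0
        have h0 : φZ z = 0 := hφ0 hzT
        rw [h0]
        simp
      rw [lintegral_congr_ae hae, lintegral_zero]
    rw [hLdef]
    have h0 : (fun n => ∫⁻ z, (ψ z : ℝ≥0∞) ∂(γs n)) = fun _ => (0:ℝ≥0∞) := funext hint
    show ulim U (fun n => ∫⁻ z, (ψ z : ℝ≥0∞) ∂(γs n)) = 0
    rw [h0, ulim_const]
  have haeT : ∀ᵐ z ∂γ, z ∈ T := by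
    rw [ae_iff]
    convert hγT using 2
    rfl
  exact ⟨γ, hmap_fst, hmap_snd, haeT.mono fun z hz => hz⟩

end Main


end AuxiliaryMachinery

/-- If `Pⁿ → P` weakly, `P^{*,n} → P*` weakly and `W_∞(Pⁿ, P^{*,n}) ≤ ε` for
all `n`, then `W_∞(P, P*) ≤ ε`. -/
theorem stmt_18 (d : ℕ) (ε : ℝ) (hε : 0 ≤ ε)
    (Pn Pstarn : ℕ → FiniteMeasure (Fin d → ℝ)) (P Pstar : FiniteMeasure (Fin d → ℝ))
    (h1 : Tendsto Pn atTop (nhds P)) (h2 : Tendsto Pstarn atTop (nhds Pstar))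
    (hW : ∀ n, Winf (Pn n : Measure (Fin d → ℝ)) (Pstarn n : Measure (Fin d → ℝ)) ≤
      ENNReal.ofReal ε) :
    Winf (P : Measure (Fin d → ℝ)) (Pstar : Measure (Fin d → ℝ)) ≤ ENNReal.ofReal ε := by
  refine ENNReal.le_of_forall_pos_le_add fun η hη hlt => ?_
  set c : ℝ≥0∞ := ENNReal.ofReal ε + (η : ℝ≥0∞) with hc
  have hex : ∀ n, ∃ γn : Measure ((Fin d → ℝ) × (Fin d → ℝ)),
      (γn.map Prod.fst = (Pn n : Measure (Fin d → ℝ)) ∧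
        γn.map Prod.snd = (Pstarn n : Measure (Fin d → ℝ))) ∧
      essSup (fun p => (‖p.1 - p.2‖₊ : ℝ≥0∞)) γn < c := by
    intro n
    have hlt' : Winf (Pn n : Measure (Fin d → ℝ)) (Pstarn n : Measure (Fin d → ℝ)) < c :=
      lt_of_le_of_lt (hW n)
        (ENNReal.lt_add_right ENNReal.ofReal_ne_top (by exact_mod_cast hη.ne'))
    rw [Winf, iInf_lt_iff] at hlt'
    obtain ⟨γn, h⟩ := hlt'
    rw [iInf_lt_iff] at h
    obtain ⟨hcond, hval⟩ := h
    exact ⟨γn, hcond, hval⟩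
  choose γs hconds hess using hex
  have hae : ∀ n, ∀ᵐ z ∂(γs n), (‖z.1 - z.2‖₊ : ℝ≥0∞) ≤ c := fun n =>
    (ENNReal.ae_le_essSup _).mono fun z hz => le_trans hz (hess n).le
  obtain ⟨γ, hfst, hsnd, haeg⟩ := exists_limit_coupling Pn Pstarn P Pstar h1 h2 γs
    (fun n => (hconds n).1) (fun n => (hconds n).2) hae
  calc Winf (P : Measure (Fin d → ℝ)) (Pstar : Measure (Fin d → ℝ))
      ≤ essSup (fun p => (‖p.1 - p.2‖₊ : ℝ≥0∞)) γ := by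
        rw [Winf]
        exact iInf_le_of_le γ (iInf_le _ ⟨hfst, hsnd⟩)
    _ ≤ c := essSup_le_of_ae_le _ haeg
    _ = ENNReal.ofReal ε + (η : ℝ≥0∞) := hc
end
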